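/- arXiv:1801.07991 — 10 statements merged into one kernel-verified Lean document; each statement's English description precedes it below -/
import Mathlib

section
/- Every closed 2-form ω on the Lie algebra 𝔤₁ satisfies ω(e₆, X) = 0 for all X ∈ 𝔤₁; in particular, every closed 2-form on 𝔤₁ is degenerate, so 𝔤₁ admits no symplectic (i.e. closed nondegenerate) 2-form. -/
noncomputable section

open LinearMap Module

abbrev V : Type := Fin 6 → ℝ

def e (i : Fin 6) : V := Pi.single i 1

theorem stmt_0
    (B : V →ₗ[ℝ] V →ₗ[ℝ] V)
    (hBanti : ∀ X Y, B X Y = - B Y X)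
    (hB1 : B (e 0) (e 1) = e 2)
    (hB2 : B (e 0) (e 2) = e 3)
    (hB3 : B (e 0) (e 3) = e 4)
    (hB4 : B (e 1) (e 2) = e 4)
    (hB5 : B (e 2) (e 3) = e 5)
    (hB6 : B (e 1) (e 4) = -e 5)
    (hBz : ∀ i j : Fin 6, i < j → (i, j) ∉ ({(0,1),(0,2),(0,3),(1,2),(2,3),(1,4)} : Set (Fin 6 × Fin 6)) → B (e i) (e j) = 0)
    (ω : V →ₗ[ℝ] V →ₗ[ℝ] ℝ)
    (hωalt : ∀ X, ω X X = 0)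
    (hclosed : ∀ X Y Z, ω (B X Y) Z - ω (B X Z) Y + ω (B Y Z) X = 0) :
    (∀ X, ω (e 5) X = 0) ∧ ¬ (∀ X : V, (∀ Y, ω X Y = 0) → X = 0) := by
  have hskew : ∀ X Y, ω X Y = - ω Y X := by
    intro X Y
    have h := hωalt (X + Y)
    simp [map_add, hωalt X, hωalt Y] at h
    linarith
  have z05 : B (e 0) (e 5) = 0 := hBz 0 5 (by decide) (by simp [Prod.ext_iff])
  have z15 : B (e 1) (e 5) = 0 := hBz 1 5 (by decide) (by simp [Prod.ext_iff])
  have z25 : B (e 2) (e 5) = 0 := hBz 2 5 (by decide) (by simp [Prod.ext_iff])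
  have z35 : B (e 3) (e 5) = 0 := hBz 3 5 (by decide) (by simp [Prod.ext_iff])
  have z04 : B (e 0) (e 4) = 0 := hBz 0 4 (by decide) (by simp [Prod.ext_iff])
  have z13 : B (e 1) (e 3) = 0 := hBz 1 3 (by decide) (by simp [Prod.ext_iff])
  have z24 : B (e 2) (e 4) = 0 := hBz 2 4 (by decide) (by simp [Prod.ext_iff])
  -- ω e2 e5 = 0
  have E1 := hclosed (e 0) (e 1) (e 5)
  rw [hB1, z05, z15] at E1
  simp only [map_zero, LinearMap.zero_apply, sub_zero, add_zero] at E1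
  -- ω e3 e5 = 0
  have E2 := hclosed (e 0) (e 2) (e 5)
  rw [hB2, z05, z25] at E2
  simp only [map_zero, LinearMap.zero_apply, sub_zero, add_zero] at E2
  -- ω e4 e5 = 0
  have E3 := hclosed (e 0) (e 3) (e 5)
  rw [hB3, z05, z35] at E3
  simp only [map_zero, LinearMap.zero_apply, sub_zero, add_zero] at E3
  -- ω e5 e0 = ω e4 e2
  have E4 := hclosed (e 0) (e 2) (e 3)
  rw [hB2, hB3, hB5] at E4
  rw [hωalt (e 3)] at E4
  -- ω e2 e4 + ω (-e5) e0 = 0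
  have E5 := hclosed (e 0) (e 1) (e 4)
  rw [hB1, z04, hB6] at E5
  simp only [map_zero, LinearMap.zero_apply, sub_zero, map_neg, LinearMap.neg_apply] at E5
  -- ω e3 e4 = 0
  have E7 := hclosed (e 0) (e 2) (e 4)
  rw [hB2, z04, z24] at E7
  simp only [map_zero, LinearMap.zero_apply, sub_zero, add_zero] at E7
  -- ω e4 e3 + ω e5 e1 = 0
  have E6 := hclosed (e 1) (e 2) (e 3)
  rw [hB4, z13, hB5] at E6
  simp only [map_zero, LinearMap.zero_apply, sub_zero] at E6
  have h50 : ω (e 5) (e 0) = 0 := by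
    have s1 := hskew (e 4) (e 2)
    linarith
  have h51 : ω (e 5) (e 1) = 0 := by
    have s1 := hskew (e 4) (e 3)
    linarith
  have h52 : ω (e 5) (e 2) = 0 := by have := hskew (e 5) (e 2); linarith
  have h53 : ω (e 5) (e 3) = 0 := by have := hskew (e 5) (e 3); linarith
  have h54 : ω (e 5) (e 4) = 0 := by have := hskew (e 5) (e 4); linarith
  have h55 : ω (e 5) (e 5) = 0 := hωalt _
  have h5 : ∀ j : Fin 6, ω (e 5) (e j) = 0 := by
    intro j
    fin_cases j
    exacts [h50, h51, h52, h53, h54, h55]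
  have hall : ∀ X, ω (e 5) X = 0 := by
    intro X
    have hX : X = ∑ i, X i • e i := by
      ext j
      simp [e, Finset.sum_apply, Pi.single_apply]
    rw [hX, map_sum]
    simp [h5]
  refine ⟨hall, fun hnd => ?_⟩
  have h0 := hnd (e 5) hall
  have : (e 5) 5 = (0 : ℝ) := by rw [h0]; rfl
  simp [e] at this
end
end

section
/- Every closed 2-form ω on the Lie algebra 𝔤₂ satisfies ω(e₆, X) = 0 for all X ∈ 𝔤₂; in particular, every closed 2-form on 𝔤₂ is degenerate, so 𝔤₂ admits no symplectic (i.e. closed nondegenerate) 2-form. -/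
noncomputable section

open LinearMap Module

theorem stmt_1
    (B : V →ₗ[ℝ] V →ₗ[ℝ] V)
    (hBanti : ∀ X Y, B X Y = - B Y X)
    (hB1 : B (e 0) (e 1) = e 2)
    (hB2 : B (e 0) (e 2) = e 3)
    (hB3 : B (e 0) (e 3) = e 4)
    (hB4 : B (e 2) (e 3) = e 5)
    (hB5 : B (e 1) (e 4) = -e 5)
    (hBz : ∀ i j : Fin 6, i < j → (i, j) ∉ ({(0,1),(0,2),(0,3),(2,3),(1,4)} : Set (Fin 6 × Fin 6)) → B (e i) (e j) = 0)
    (ω : V →ₗ[ℝ] V →ₗ[ℝ] ℝ)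
    (hωalt : ∀ X, ω X X = 0)
    (hclosed : ∀ X Y Z, ω (B X Y) Z - ω (B X Z) Y + ω (B Y Z) X = 0) :
    (∀ X, ω (e 5) X = 0) ∧ ¬ (∀ X : V, (∀ Y, ω X Y = 0) → X = 0) := by
  have hskew : ∀ X Y, ω X Y = - ω Y X := by
    intro X Y
    have h := hωalt (X + Y)
    simp only [map_add, LinearMap.add_apply] at h
    have h1 := hωalt X
    have h2 := hωalt Y
    linarith
  -- zero brackets we need
  have h04 : B (e 0) (e 4) = 0 := hBz 0 4 (by decide) (by decide)
  have h12 : B (e 1) (e 2) = 0 := hBz 1 2 (by decide) (by decide)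
  have h13 : B (e 1) (e 3) = 0 := hBz 1 3 (by decide) (by decide)
  have h24 : B (e 2) (e 4) = 0 := hBz 2 4 (by decide) (by decide)
  have h34 : B (e 3) (e 4) = 0 := hBz 3 4 (by decide) (by decide)
  have h21 : B (e 2) (e 1) = 0 := by rw [hBanti, h12, neg_zero]
  have h31 : B (e 3) (e 1) = 0 := by rw [hBanti, h13, neg_zero]
  have h42 : B (e 4) (e 2) = 0 := by rw [hBanti, h24, neg_zero]
  have h43 : B (e 4) (e 3) = 0 := by rw [hBanti, h34, neg_zero]
  -- closedness instances
  have E1 := hclosed (e 0) (e 1) (e 4)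
  rw [hB1, h04, hB5] at E1
  simp only [map_zero, LinearMap.zero_apply, map_neg, LinearMap.neg_apply] at E1
  have E2 := hclosed (e 0) (e 2) (e 3)
  rw [hB2, hB3, hB4] at E2
  have hs := hskew (e 4) (e 2)
  have h50 : ω (e 5) (e 0) = 0 := by
    have := hωalt (e 3)
    linarith
  have h51 : ω (e 5) (e 1) = 0 := by
    have E3 := hclosed (e 2) (e 3) (e 1)
    rw [hB4, h21, h31] at E3
    simp only [map_zero, LinearMap.zero_apply] at E3
    linarith
  have h52 : ω (e 5) (e 2) = 0 := by
    have E4 := hclosed (e 1) (e 4) (e 2)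
    rw [hB5, h12, h42] at E4
    simp only [map_zero, LinearMap.zero_apply, map_neg, LinearMap.neg_apply] at E4
    linarith
  have h53 : ω (e 5) (e 3) = 0 := by
    have E5 := hclosed (e 1) (e 4) (e 3)
    rw [hB5, h13, h43] at E5
    simp only [map_zero, LinearMap.zero_apply, map_neg, LinearMap.neg_apply] at E5
    linarith
  have h54 : ω (e 5) (e 4) = 0 := by
    have E6 := hclosed (e 2) (e 3) (e 4)
    rw [hB4, h24, h34] at E6
    simp only [map_zero, LinearMap.zero_apply] at E6
    linarith
  have h55 : ω (e 5) (e 5) = 0 := hωalt (e 5)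
  have key : ∀ i : Fin 6, ω (e 5) (e i) = 0 := by
    intro i
    fin_cases i <;> assumption
  have hall : ∀ X, ω (e 5) X = 0 := by
    intro X
    have hX : X = ∑ i : Fin 6, X i • e i := by
      funext j
      simp [e, Finset.sum_apply, Pi.single_apply]
    rw [hX, map_sum]
    simp [key]
  refine ⟨hall, fun h => ?_⟩
  have h5 := h (e 5) (hall)
  have := congrFun h5 5
  simp [e] at this
end
end

section
/- Every closed 2-form ω on the Lie algebra 𝔤₃ satisfies ω(e₆, X) = 0 for all X ∈ 𝔤₃; in particular, every closed 2-form on 𝔤₃ is degenerate, so 𝔤₃ admits no symplectic (i.e. closed nondegenerate) 2-form. -/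
/-
Indices are 0-based: `e i` is the paper's `e_{i+1}`, so `e 5` is `e₆`.
Closedness evaluated on a triple of basis vectors is a linear relation among the values
`ω (e i) (e j)`. The triples `(0,1,4)` and `(0,2,5)` give `ω (e 3) (e 4) = ω (e 4) (e 5) = 0`;
with these and alternation, the triples `(0,2,4)`, `(0,1,3)`, `(0,2,3)`, `(2,3,4)` give
`ω (e 5) (e i) = 0` for `i = 0, 1, 2, 3`. So `e 5` lies in the radical of `ω`.
-/

noncomputable section

open LinearMap Module

theorem e_ne_zero (i : Fin 6) : e i ≠ 0 :=
  Pi.single_ne_zero_iff.mpr one_ne_zero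

theorem eq_zero_of_apply_e_eq_zero {f : V →ₗ[ℝ] ℝ} (h : ∀ i, f (e i) = 0) : f = 0 :=
  (Pi.basisFun ℝ (Fin 6)).ext fun i => by simpa [e] using h i

theorem apply_e_five_e_eq_zero {B : V →ₗ[ℝ] V →ₗ[ℝ] V} {ω : V →ₗ[ℝ] V →ₗ[ℝ] ℝ}
    (hB1 : B (e 0) (e 1) = e 3) (hB2 : B (e 0) (e 2) = e 4)
    (hB3 : B (e 0) (e 3) = e 5) (hB4 : B (e 2) (e 4) = e 5)
    (hBz : ∀ i j : Fin 6, i < j →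
      (i, j) ∉ ({(0,1),(0,2),(0,3),(2,4)} : Set (Fin 6 × Fin 6)) → B (e i) (e j) = 0)
    (hωalt : ω.IsAlt)
    (hclosed : ∀ X Y Z, ω (B X Y) Z - ω (B X Z) Y + ω (B Y Z) X = 0) (i : Fin 6) :
    ω (e 5) (e i) = 0 := by
  have z04 : B (e 0) (e 4) = 0 := hBz 0 4 (by decide) (by simp)
  have z05 : B (e 0) (e 5) = 0 := hBz 0 5 (by decide) (by simp)
  have z13 : B (e 1) (e 3) = 0 := hBz 1 3 (by decide) (by simp)
  have z14 : B (e 1) (e 4) = 0 := hBz 1 4 (by decide) (by simp)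
  have z23 : B (e 2) (e 3) = 0 := hBz 2 3 (by decide) (by simp)
  have z25 : B (e 2) (e 5) = 0 := hBz 2 5 (by decide) (by simp)
  have z34 : B (e 3) (e 4) = 0 := hBz 3 4 (by decide) (by simp)
  have h34 : ω (e 3) (e 4) = 0 := by simpa [hB1, z04, z14] using hclosed (e 0) (e 1) (e 4)
  have h45 : ω (e 4) (e 5) = 0 := by simpa [hB2, z05, z25] using hclosed (e 0) (e 2) (e 5)
  fin_cases i
  · simpa [hB2, z04, hB4, hωalt.self_eq_zero] using hclosed (e 0) (e 2) (e 4)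
  · simpa [hB1, hB3, z13, hωalt.self_eq_zero] using hclosed (e 0) (e 1) (e 3)
  · simpa [hB2, hB3, z23, hωalt.eq_iff.mp h34] using hclosed (e 0) (e 2) (e 3)
  · simpa [z23, hB4, z34] using hclosed (e 2) (e 3) (e 4)
  · exact hωalt.eq_iff.mp h45
  · exact hωalt.self_eq_zero _

theorem stmt_2_general
    (B : V →ₗ[ℝ] V →ₗ[ℝ] V)
    (hB1 : B (e 0) (e 1) = e 3)
    (hB2 : B (e 0) (e 2) = e 4)
    (hB3 : B (e 0) (e 3) = e 5)
    (hB4 : B (e 2) (e 4) = e 5)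
    (hBz : ∀ i j : Fin 6, i < j → (i, j) ∉ ({(0,1),(0,2),(0,3),(2,4)} : Set (Fin 6 × Fin 6)) → B (e i) (e j) = 0)
    (ω : V →ₗ[ℝ] V →ₗ[ℝ] ℝ)
    (hωalt : ∀ X, ω X X = 0)
    (hclosed : ∀ X Y Z, ω (B X Y) Z - ω (B X Z) Y + ω (B Y Z) X = 0) :
    (∀ X, ω (e 5) X = 0) ∧ ¬ (∀ X : V, (∀ Y, ω X Y = 0) → X = 0) := by
  have hrad : ω (e 5) = 0 := eq_zero_of_apply_e_eq_zero
    (apply_e_five_e_eq_zero hB1 hB2 hB3 hB4 hBz hωalt hclosed)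
  have hrad_apply (X : V) : ω (e 5) X = 0 := LinearMap.congr_fun hrad X
  exact ⟨hrad_apply, fun hsep => e_ne_zero 5 (hsep _ hrad_apply)⟩

theorem stmt_2
    (B : V →ₗ[ℝ] V →ₗ[ℝ] V)
    (hBanti : ∀ X Y, B X Y = - B Y X)
    (hB1 : B (e 0) (e 1) = e 3)
    (hB2 : B (e 0) (e 2) = e 4)
    (hB3 : B (e 0) (e 3) = e 5)
    (hB4 : B (e 2) (e 4) = e 5)
    (hBz : ∀ i j : Fin 6, i < j → (i, j) ∉ ({(0,1),(0,2),(0,3),(2,4)} : Set (Fin 6 × Fin 6)) → B (e i) (e j) = 0)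
    (ω : V →ₗ[ℝ] V →ₗ[ℝ] ℝ)
    (hωalt : ∀ X, ω X X = 0)
    (hclosed : ∀ X Y Z, ω (B X Y) Z - ω (B X Z) Y + ω (B Y Z) X = 0) :
    (∀ X, ω (e 5) X = 0) ∧ ¬ (∀ X : V, (∀ Y, ω X Y = 0) → X = 0) :=
  stmt_2_general B hB1 hB2 hB3 hB4 hBz ω hωalt hclosed
end
end

section
/- Every closed 2-form ω on the Lie algebra 𝔤₄ satisfies ω(e₆, X) = 0 for all X ∈ 𝔤₄; in particular, every closed 2-form on 𝔤₄ is degenerate, so 𝔤₄ admits no symplectic (i.e. closed nondegenerate) 2-form. -/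
noncomputable section

open LinearMap Module

theorem stmt_3
    (B : V →ₗ[ℝ] V →ₗ[ℝ] V)
    (hBanti : ∀ X Y, B X Y = - B Y X)
    (hB1 : B (e 0) (e 1) = e 3)
    (hB2 : B (e 1) (e 2) = e 4)
    (hB3 : B (e 0) (e 3) = e 5)
    (hB4 : B (e 2) (e 4) = e 5)
    (hBz : ∀ i j : Fin 6, i < j → (i, j) ∉ ({(0,1),(1,2),(0,3),(2,4)} : Set (Fin 6 × Fin 6)) → B (e i) (e j) = 0)
    (ω : V →ₗ[ℝ] V →ₗ[ℝ] ℝ)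
    (hωalt : ∀ X, ω X X = 0)
    (hclosed : ∀ X Y Z, ω (B X Y) Z - ω (B X Z) Y + ω (B Y Z) X = 0) :
    (∀ X, ω (e 5) X = 0) ∧ ¬ (∀ X : V, (∀ Y, ω X Y = 0) → X = 0) := by
  have hz : ∀ i j : Fin 6, i < j → (i, j) ∉ ({(0,1),(1,2),(0,3),(2,4)} : Set (Fin 6 × Fin 6)) → B (e i) (e j) = 0 := hBz
  have b02 : B (e 0) (e 2) = 0 := hz 0 2 (by decide) (by simp)
  have b04 : B (e 0) (e 4) = 0 := hz 0 4 (by decide) (by simp)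
  have b13 : B (e 1) (e 3) = 0 := hz 1 3 (by decide) (by simp)
  have b23 : B (e 2) (e 3) = 0 := hz 2 3 (by decide) (by simp)
  have b34 : B (e 3) (e 4) = 0 := hz 3 4 (by decide) (by simp)
  have h1 : ω (e 5) (e 1) = 0 := by
    have := hclosed (e 0) (e 1) (e 3)
    rw [hB1, hB3, b13] at this
    simpa [hωalt] using this
  have h0 : ω (e 5) (e 0) = 0 := by
    have := hclosed (e 0) (e 2) (e 4)
    rw [hB4, b02, b04] at this
    simpa using this
  have h2 : ω (e 5) (e 2) = 0 := by
    have := hclosed (e 0) (e 2) (e 3)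
    rw [hB3, b02, b23] at this
    simpa using this.symm
  have h3 : ω (e 5) (e 3) = 0 := by
    have := hclosed (e 2) (e 3) (e 4)
    rw [hB4, b23, b34] at this
    simpa using this.symm
  have h4 : ω (e 5) (e 4) = 0 := by
    have := hclosed (e 0) (e 3) (e 4)
    rw [hB3, b04, b34] at this
    simpa using this
  have h5 : ω (e 5) (e 5) = 0 := hωalt _
  have hall : ∀ X, ω (e 5) X = 0 := by
    intro X
    have hX : X = ∑ i : Fin 6, X i • e i := by
      funext j
      simp [e, Pi.single_apply, Finset.sum_apply]
    rw [hX, map_sum]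
    apply Finset.sum_eq_zero
    intro i _
    rw [map_smul]
    fin_cases i <;> simp [h0, h1, h2, h3, h4, h5]
  refine ⟨hall, fun h => ?_⟩
  have he : e 5 = 0 := h (e 5) hall
  have : (e 5) 5 = (0 : ℝ) := by rw [he]; rfl
  simp [e] at this
end
end

section
/- Every closed 2-form ω on the Lie algebra 𝔤₅ satisfies ω(e₆, X) = 0 for all X ∈ 𝔤₅; in particular, every closed 2-form on 𝔤₅ is degenerate, so 𝔤₅ admits no symplectic (i.e. closed nondegenerate) 2-form. -/
noncomputable section

open LinearMap Module

theorem stmt_4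
    (B : V →ₗ[ℝ] V →ₗ[ℝ] V)
    (hBanti : ∀ X Y, B X Y = - B Y X)
    (hB1 : B (e 0) (e 1) = e 4)
    (hB2 : B (e 0) (e 4) = e 5)
    (hB3 : B (e 2) (e 3) = e 5)
    (hBz : ∀ i j : Fin 6, i < j → (i, j) ∉ ({(0,1),(0,4),(2,3)} : Set (Fin 6 × Fin 6)) → B (e i) (e j) = 0)
    (ω : V →ₗ[ℝ] V →ₗ[ℝ] ℝ)
    (hωalt : ∀ X, ω X X = 0)
    (hclosed : ∀ X Y Z, ω (B X Y) Z - ω (B X Z) Y + ω (B Y Z) X = 0) :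
    (∀ X, ω (e 5) X = 0) ∧ ¬ (∀ X : V, (∀ Y, ω X Y = 0) → X = 0) := by
  have h0 : ∀ i : Fin 6, ω (e 5) (e i) = 0 := by
    intro i
    fin_cases i
    · have h := hclosed (e 2) (e 3) (e 0)
      rw [hB3, hBanti (e 2) (e 0), hBanti (e 3) (e 0),
          hBz 0 2 (by decide) (by decide), hBz 0 3 (by decide) (by decide)] at h
      simpa using h
    · have h := hclosed (e 2) (e 3) (e 1)
      rw [hB3, hBanti (e 2) (e 1), hBanti (e 3) (e 1),
          hBz 1 2 (by decide) (by decide), hBz 1 3 (by decide) (by decide)] at h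
      simpa using h
    · have h := hclosed (e 0) (e 4) (e 2)
      rw [hB2, hBanti (e 4) (e 2),
          hBz 0 2 (by decide) (by decide), hBz 2 4 (by decide) (by decide)] at h
      simpa using h
    · have h := hclosed (e 0) (e 4) (e 3)
      rw [hB2, hBanti (e 4) (e 3),
          hBz 0 3 (by decide) (by decide), hBz 3 4 (by decide) (by decide)] at h
      simpa using h
    · have h := hclosed (e 2) (e 3) (e 4)
      rw [hB3, hBz 2 4 (by decide) (by decide), hBz 3 4 (by decide) (by decide)] at h
      simpa using h
    · exact hωalt (e 5)
  have hall : ∀ X, ω (e 5) X = 0 := by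
    intro X
    have hX : X = ∑ i : Fin 6, X i • e i := by
      ext j
      simp [e, Pi.single_apply, Finset.sum_apply]
    rw [hX]
    simp [h0]
  refine ⟨hall, fun h => ?_⟩
  have h5 := h (e 5) hall
  have := congrFun h5 5
  simp [e] at this
end
end

section
/- The (+1)-eigenspace of P is the span E⁺ of {a₅₆³e₁ − a₅₆a₄₆²e₃ + a₄₆³e₄, −a₅₆e₁ + a₄₆e₂, e₅} and the (−1)-eigenspace of P is the span E⁻ of {e₁, −a₅₆e₂ + a₄₆e₃, −a₅₆²e₅ + a₄₆²e₆}; both are 3-dimensional, and neither E⁺ nor E⁻ is closed under the Lie bracket of 𝔤₁ (so P is a non-integrable almost para-complex structure). -/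
noncomputable section

open LinearMap Module

/-!
The listed generators of `E⁺` and `E⁻` are checked by direct computation to be eigenvectors of
`P` for `1` and `-1`. Up to the unit `a46`, the basis is unitriangular with respect to these six
vectors, so `E⁺ ⊔ E⁻` is everything; since eigenspaces for distinct eigenvalues are independent,
each eigenspace is exactly the given span, and `6 = dim E⁺ + dim E⁻` with both dimensions at most
`3` forces both to be `3`. For non-integrability, `[-a56 e 0 + a46 e 1, e 4] = -a46 e 5` has a
nonzero `e 5`-coordinate, which vanishes on `E⁺`, and `[e 0, -a56 e 1 + a46 e 2]` has
`e 3`-coordinate `a46`, which vanishes on `E⁻`.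
-/

namespace Module.End

variable {K M : Type*} [Field K] [AddCommGroup M] [Module K M]

theorem eigenspace_eq_of_le_of_sup_eq_top {f : End K M} {μ ν : K} (hμν : μ ≠ ν)
    {U W : Submodule K M} (hU : U ≤ f.eigenspace μ) (hW : W ≤ f.eigenspace ν)
    (hUW : U ⊔ W = ⊤) : f.eigenspace μ = U := by
  refine le_antisymm (fun v hv => ?_) hU
  obtain ⟨x, hx, y, hy, rfl⟩ := Submodule.mem_sup.mp (hUW ▸ Submodule.mem_top : v ∈ U ⊔ W)
  have hyμ : y ∈ f.eigenspace μ := (Submodule.add_mem_iff_right _ (hU hx)).mp hv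
  have hy0 : y = 0 :=
    Submodule.disjoint_def.mp (f.eigenspaces_iSupIndep.pairwiseDisjoint hμν) y hyμ (hW hy)
  simpa [hy0] using hx

end Module.End

theorem finrank_span_triple_le {R M : Type*} [Ring R] [StrongRankCondition R] [AddCommGroup M]
    [Module R M] (u v w : M) : finrank R (Submodule.span R {u, v, w}) ≤ 3 := by
  classical
  have h := finrank_span_finset_le_card (R := R) ({u, v, w} : Finset M)
  simp only [Finset.coe_insert, Finset.coe_singleton] at h
  exact h.trans Finset.card_le_three

theorem finrank_eq_of_sup_eq_top {K M : Type*} [Field K] [AddCommGroup M] [Module K M]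
    [FiniteDimensional K M] {U W : Submodule K M} {m n : ℕ}
    (hUW : U ⊔ W = ⊤) (hU : finrank K U ≤ m) (hW : finrank K W ≤ n)
    (hM : finrank K M = m + n) : finrank K U = m ∧ finrank K W = n := by
  have h := Submodule.finrank_sup_add_finrank_inf_eq U W
  rw [hUW, finrank_top, hM] at h
  omega

theorem Submodule.eq_top_of_forall_single_mem {R ι : Type*} [Semiring R] [Finite ι]
    [DecidableEq ι] {S : Submodule R (ι → R)} (h : ∀ i, Pi.single i 1 ∈ S) : S = ⊤ := by
  have := Fintype.ofFinite ι
  rw [eq_top_iff, ← (Pi.basisFun R ι).span_eq, Submodule.span_le]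
  rintro _ ⟨i, rfl⟩
  simpa using h i

theorem not_forall_bilin_mem_of_le_ker {K M : Type*} [CommSemiring K] [AddCommMonoid M]
    [Module K M] (B : M →ₗ[K] M →ₗ[K] M) {S : Submodule K M} (φ : M →ₗ[K] K)
    (hS : S ≤ ker φ) {X Y : M} (hX : X ∈ S) (hY : Y ∈ S) (hXY : φ (B X Y) ≠ 0) :
    ¬ ∀ X ∈ S, ∀ Y ∈ S, B X Y ∈ S :=
  fun h => hXY (hS (h X hX Y hY))

def plusSpace (a46 a56 : ℝ) : Submodule ℝ V :=
  Submodule.span ℝ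
    {a56^3 • e 0 - (a56*a46^2) • e 2 + a46^3 • e 3, -a56 • e 0 + a46 • e 1, e 4}

def minusSpace (a46 a56 : ℝ) : Submodule ℝ V :=
  Submodule.span ℝ {e 0, -a56 • e 1 + a46 • e 2, -a56^2 • e 4 + a46^2 • e 5}

section Spaces

variable {a46 : ℝ} (a56 : ℝ)

theorem plusSpace_le_eigenspace_one {P : Module.End ℝ V} (hP1 : P (e 0) = -e 0)
    (hP2 : P (e 1) = -(2*a56/a46) • e 0 + e 1)
    (hP3 : P (e 2) = -(2*a56^2/a46^2) • e 0 + (2*a56/a46) • e 1 - e 2)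
    (hP4 : P (e 3) = (2*a56^2/a46^2) • e 1 - (2*a56/a46) • e 2 + e 3)
    (hP5 : P (e 4) = e 4) (ha46 : a46 ≠ 0) :
    plusSpace a46 a56 ≤ P.eigenspace 1 := by
  rw [plusSpace, Submodule.span_le]
  rintro v (rfl | rfl | rfl) <;>
    simp only [SetLike.mem_coe, Module.End.mem_eigenspace_iff, one_smul, map_add, map_sub,
      map_smul, hP1, hP2, hP3, hP4, hP5] <;>
    match_scalars <;> field_simp <;> ring

theorem minusSpace_le_eigenspace_neg_one {P : Module.End ℝ V} (hP1 : P (e 0) = -e 0)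
    (hP2 : P (e 1) = -(2*a56/a46) • e 0 + e 1)
    (hP3 : P (e 2) = -(2*a56^2/a46^2) • e 0 + (2*a56/a46) • e 1 - e 2)
    (hP5 : P (e 4) = e 4) (hP6 : P (e 5) = (2*a56^2/a46^2) • e 4 - e 5) (ha46 : a46 ≠ 0) :
    minusSpace a46 a56 ≤ P.eigenspace (-1) := by
  rw [minusSpace, Submodule.span_le]
  rintro v (rfl | rfl | rfl) <;>
    simp only [SetLike.mem_coe, Module.End.mem_eigenspace_iff, neg_smul, one_smul, map_add,
      map_neg, map_smul, hP1, hP2, hP3, hP5, hP6] <;>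
    match_scalars <;> field_simp <;> ring

theorem plusSpace_sup_minusSpace (ha46 : a46 ≠ 0) :
    plusSpace a46 a56 ⊔ minusSpace a46 a56 = ⊤ := by
  set S := plusSpace a46 a56 ⊔ minusSpace a46 a56
  have hp : ∀ {v}, v ∈ plusSpace a46 a56 → v ∈ S := fun hv => Submodule.mem_sup_left hv
  have hm : ∀ {v}, v ∈ minusSpace a46 a56 → v ∈ S := fun hv => Submodule.mem_sup_right hv
  -- Each `e i` is, up to a unit, a generator plus a combination of earlier `e j`.
  have h0 : e 0 ∈ S := hm (Submodule.subset_span (by simp))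
  have h1 : e 1 ∈ S := (S.smul_mem_iff ha46).mp <| by
    rw [show a46 • e 1 = (-a56 • e 0 + a46 • e 1) + a56 • e 0 by module]
    exact add_mem (hp (Submodule.subset_span (by simp))) (S.smul_mem _ h0)
  have h2 : e 2 ∈ S := (S.smul_mem_iff ha46).mp <| by
    rw [show a46 • e 2 = (-a56 • e 1 + a46 • e 2) + a56 • e 1 by module]
    exact add_mem (hm (Submodule.subset_span (by simp))) (S.smul_mem _ h1)
  have h3 : e 3 ∈ S := (S.smul_mem_iff (pow_ne_zero 3 ha46)).mp <| by
    rw [show a46^3 • e 3 = (a56^3 • e 0 - (a56*a46^2) • e 2 + a46^3 • e 3)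
      - a56^3 • e 0 + (a56*a46^2) • e 2 by module]
    exact add_mem (sub_mem (hp (Submodule.subset_span (by simp))) (S.smul_mem _ h0))
      (S.smul_mem _ h2)
  have h4 : e 4 ∈ S := hp (Submodule.subset_span (by simp))
  have h5 : e 5 ∈ S := (S.smul_mem_iff (pow_ne_zero 2 ha46)).mp <| by
    rw [show a46^2 • e 5 = (-a56^2 • e 4 + a46^2 • e 5) + a56^2 • e 4 by module]
    exact add_mem (hm (Submodule.subset_span (by simp))) (S.smul_mem _ h4)
  refine Submodule.eq_top_of_forall_single_mem fun i => ?_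
  fin_cases i
  exacts [h0, h1, h2, h3, h4, h5]

theorem not_forall_bracket_mem_plusSpace (ha46 : a46 ≠ 0) {B : V →ₗ[ℝ] V →ₗ[ℝ] V}
    (hB14 : B (e 1) (e 4) = -e 5) (hB04 : B (e 0) (e 4) = 0) :
    ¬ ∀ X ∈ plusSpace a46 a56, ∀ Y ∈ plusSpace a46 a56, B X Y ∈ plusSpace a46 a56 := by
  have hXY : B (-a56 • e 0 + a46 • e 1) (e 4) = -a46 • e 5 := by
    simp only [map_add, map_smul, LinearMap.add_apply, LinearMap.smul_apply, hB14, hB04]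
    module
  have hX : -a56 • e 0 + a46 • e 1 ∈ plusSpace a46 a56 := Submodule.subset_span (by simp)
  have hY : e 4 ∈ plusSpace a46 a56 := Submodule.subset_span (by simp)
  refine not_forall_bilin_mem_of_le_ker B (proj 5) ?_ hX hY (by rw [hXY]; simp [e, ha46])
  rw [plusSpace, Submodule.span_le]
  rintro v (rfl | rfl | rfl) <;> simp [e]

theorem not_forall_bracket_mem_minusSpace (ha46 : a46 ≠ 0) {B : V →ₗ[ℝ] V →ₗ[ℝ] V}
    (hB01 : B (e 0) (e 1) = e 2) (hB02 : B (e 0) (e 2) = e 3) :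
    ¬ ∀ X ∈ minusSpace a46 a56, ∀ Y ∈ minusSpace a46 a56, B X Y ∈ minusSpace a46 a56 := by
  have hXY : B (e 0) (-a56 • e 1 + a46 • e 2) = -a56 • e 2 + a46 • e 3 := by
    simp only [map_add, map_smul, hB01, hB02]
  have hX : e 0 ∈ minusSpace a46 a56 := Submodule.subset_span (by simp)
  have hY : -a56 • e 1 + a46 • e 2 ∈ minusSpace a46 a56 := Submodule.subset_span (by simp)
  refine not_forall_bilin_mem_of_le_ker B (proj 3) ?_ hX hY (by rw [hXY]; simp [e, ha46])
  rw [minusSpace, Submodule.span_le]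
  rintro v (rfl | rfl | rfl) <;> simp [e]

end Spaces

theorem stmt_6_general
    (a46 a56 : ℝ) (ha46 : a46 ≠ 0)
    (B : V →ₗ[ℝ] V →ₗ[ℝ] V)
    (hB1 : B (e 0) (e 1) = e 2)
    (hB2 : B (e 0) (e 2) = e 3)
    (hB6 : B (e 1) (e 4) = -e 5)
    (hBz : ∀ i j : Fin 6, i < j → (i, j) ∉ ({(0,1),(0,2),(0,3),(1,2),(2,3),(1,4)} : Set (Fin 6 × Fin 6)) → B (e i) (e j) = 0)
    (P : Module.End ℝ V)
    (hP1 : P (e 0) = -e 0)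
    (hP2 : P (e 1) = -(2*a56/a46) • e 0 + e 1)
    (hP3 : P (e 2) = -(2*a56^2/a46^2) • e 0 + (2*a56/a46) • e 1 - e 2)
    (hP4 : P (e 3) = (2*a56^2/a46^2) • e 1 - (2*a56/a46) • e 2 + e 3)
    (hP5 : P (e 4) = e 4)
    (hP6 : P (e 5) = (2*a56^2/a46^2) • e 4 - e 5)
    (Ep Em : Submodule ℝ V)
    (hEp : Ep = Submodule.span ℝ ({a56^3 • e 0 - (a56*a46^2) • e 2 + a46^3 • e 3, -a56 • e 0 + a46 • e 1, e 4} : Set V))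
    (hEm : Em = Submodule.span ℝ ({(e 0 : V), -a56 • e 1 + a46 • e 2, -a56^2 • e 4 + a46^2 • e 5} : Set V)) :
    Module.End.eigenspace P 1 = Ep ∧
    Module.End.eigenspace P (-1) = Em ∧
    Module.finrank ℝ Ep = 3 ∧
    Module.finrank ℝ Em = 3 ∧
    ¬ (∀ X ∈ Ep, ∀ Y ∈ Ep, B X Y ∈ Ep) ∧
    ¬ (∀ X ∈ Em, ∀ Y ∈ Em, B X Y ∈ Em) := by
  change Ep = plusSpace a46 a56 at hEp
  change Em = minusSpace a46 a56 at hEm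
  subst hEp hEm
  have hplus := plusSpace_le_eigenspace_one a56 hP1 hP2 hP3 hP4 hP5 ha46
  have hminus := minusSpace_le_eigenspace_neg_one a56 hP1 hP2 hP3 hP5 hP6 ha46
  have htop := plusSpace_sup_minusSpace a56 ha46
  obtain ⟨hdim_plus, hdim_minus⟩ := finrank_eq_of_sup_eq_top htop
    (finrank_span_triple_le _ _ _) (finrank_span_triple_le _ _ _) (by simp)
  exact ⟨Module.End.eigenspace_eq_of_le_of_sup_eq_top (by norm_num) hplus hminus htop,
    Module.End.eigenspace_eq_of_le_of_sup_eq_top (by norm_num) hminus hplus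
      (sup_comm (plusSpace a46 a56) _ ▸ htop), hdim_plus, hdim_minus,
    not_forall_bracket_mem_plusSpace a56 ha46 hB6 (hBz 0 4 (by decide) (by decide)),
    not_forall_bracket_mem_minusSpace a56 ha46 hB1 hB2⟩

theorem stmt_6
    (a46 a56 : ℝ) (ha46 : a46 ≠ 0) (ha56 : a56 ≠ 0)
    (B : V →ₗ[ℝ] V →ₗ[ℝ] V)
    (hBanti : ∀ X Y, B X Y = - B Y X)
    (hB1 : B (e 0) (e 1) = e 2)
    (hB2 : B (e 0) (e 2) = e 3)
    (hB3 : B (e 0) (e 3) = e 4)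
    (hB4 : B (e 1) (e 2) = e 4)
    (hB5 : B (e 2) (e 3) = e 5)
    (hB6 : B (e 1) (e 4) = -e 5)
    (hBz : ∀ i j : Fin 6, i < j → (i, j) ∉ ({(0,1),(0,2),(0,3),(1,2),(2,3),(1,4)} : Set (Fin 6 × Fin 6)) → B (e i) (e j) = 0)
    (P : Module.End ℝ V)
    (hP1 : P (e 0) = -e 0)
    (hP2 : P (e 1) = -(2*a56/a46) • e 0 + e 1)
    (hP3 : P (e 2) = -(2*a56^2/a46^2) • e 0 + (2*a56/a46) • e 1 - e 2)
    (hP4 : P (e 3) = (2*a56^2/a46^2) • e 1 - (2*a56/a46) • e 2 + e 3)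
    (hP5 : P (e 4) = e 4)
    (hP6 : P (e 5) = (2*a56^2/a46^2) • e 4 - e 5)
    (Ep Em : Submodule ℝ V)
    (hEp : Ep = Submodule.span ℝ ({a56^3 • e 0 - (a56*a46^2) • e 2 + a46^3 • e 3, -a56 • e 0 + a46 • e 1, e 4} : Set V))
    (hEm : Em = Submodule.span ℝ ({(e 0 : V), -a56 • e 1 + a46 • e 2, -a56^2 • e 4 + a46^2 • e 5} : Set V)) :
    Module.End.eigenspace P 1 = Ep ∧
    Module.End.eigenspace P (-1) = Em ∧
    Module.finrank ℝ Ep = 3 ∧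
    Module.finrank ℝ Em = 3 ∧
    ¬ (∀ X ∈ Ep, ∀ Y ∈ Ep, B X Y ∈ Ep) ∧
    ¬ (∀ X ∈ Em, ∀ Y ∈ Em, B X Y ∈ Em) :=
  stmt_6_general a46 a56 ha46 B hB1 hB2 hB6 hBz P hP1 hP2 hP3 hP4 hP5 hP6 Ep Em hEp hEm
end
end

section
/- The operator J on 𝔤₁ satisfies J∘J = −Id and ω(JX, JY) = ω(X, Y) for all X, Y ∈ 𝔤₁ (so J is an almost complex structure compatible with ω). -/
noncomputable section

open LinearMap Module

set_option maxHeartbeats 8000000 in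
theorem stmt_10
    (a13 a14 a45 a46 a56 : ℝ)
    (ha14 : a14 ≠ 0) (ha46 : a46 ≠ 0) (ha56 : a56 ≠ 0)
    (ha45 : a45 = (a46^4 + 1)/(4*a46*a56^2))
    (B : V →ₗ[ℝ] V →ₗ[ℝ] V)
    (hBanti : ∀ X Y, B X Y = - B Y X)
    (hB1 : B (e 0) (e 1) = e 2)
    (hB2 : B (e 0) (e 2) = e 3)
    (hB3 : B (e 0) (e 3) = e 4)
    (hB4 : B (e 1) (e 2) = e 4)
    (hB5 : B (e 2) (e 3) = e 5)
    (hB6 : B (e 1) (e 4) = -e 5)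
    (hBz : ∀ i j : Fin 6, i < j → (i, j) ∉ ({(0,1),(0,2),(0,3),(1,2),(2,3),(1,4)} : Set (Fin 6 × Fin 6)) → B (e i) (e j) = 0)
    (ω : V →ₗ[ℝ] V →ₗ[ℝ] ℝ)
    (hωalt : ∀ X, ω X X = 0)
    (hω1 : ω (e 0) (e 1) = a13*a46/a56)
    (hω2 : ω (e 0) (e 2) = a13)
    (hω3 : ω (e 0) (e 3) = a14)
    (hω4 : ω (e 1) (e 2) = -a14)
    (hω5 : ω (e 3) (e 4) = a45)
    (hω6 : ω (e 3) (e 5) = a46)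
    (hω7 : ω (e 4) (e 5) = a56)
    (hωz : ∀ i j : Fin 6, i < j → (i, j) ∉ ({(0,1),(0,2),(0,3),(1,2),(3,4),(3,5),(4,5)} : Set (Fin 6 × Fin 6)) → ω (e i) (e j) = 0)
    (J : Module.End ℝ V)
    (hJ1 : J (e 0) = -a46^2 • e 0 + ((1+a46^4)/(2*a46*a56)) • e 1)
    (hJ2 : J (e 1) = -(2*a46*a56) • e 0 + a46^2 • e 1)
    (hJ3 : J (e 2) = -(2*a56^2) • e 0 + (2*a46*a56) • e 1 - a46^2 • e 2 + ((1+a46^4)/(2*a46*a56)) • e 3 - ((1+a46^4)/(2*a56^2)) • e 4 + ((1+a46^4)^2/(8*a46^2*a56^4)) • e 5)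
    (hJ4 : J (e 3) = (2*a56^2) • e 1 - (2*a46*a56) • e 2 + a46^2 • e 3 - ((1+a46^4)/(2*a46*a56)) • e 4)
    (hJ5 : J (e 4) = a46^2 • e 4 - ((1+a46^4)/(2*a56^2)) • e 5)
    (hJ6 : J (e 5) = (2*a56^2) • e 4 - a46^2 • e 5) :
    J ∘ₗ J = - LinearMap.id ∧
    (∀ X Y, ω (J X) (J Y) = ω X Y) := by
  subst ha45
  have hanti : ∀ X Y, ω X Y = - ω Y X := by
    intro X Y
    have h := hωalt (X + Y)
    simp only [map_add, LinearMap.add_apply, hωalt] at h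
    linarith
  have t00 : ω (e 0) (e 0) = 0 := hωalt _
  have t01 : ω (e 0) (e 1) = a13*a46/a56 := hω1
  have t02 : ω (e 0) (e 2) = a13 := hω2
  have t03 : ω (e 0) (e 3) = a14 := hω3
  have t04 : ω (e 0) (e 4) = 0 := hωz 0 4 (by decide) (by simp)
  have t05 : ω (e 0) (e 5) = 0 := hωz 0 5 (by decide) (by simp)
  have t10 : ω (e 1) (e 0) = -(a13*a46/a56) := by rw [hanti, hω1]
  have t11 : ω (e 1) (e 1) = 0 := hωalt _
  have t12 : ω (e 1) (e 2) = -a14 := hω4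
  have t13 : ω (e 1) (e 3) = 0 := hωz 1 3 (by decide) (by simp)
  have t14 : ω (e 1) (e 4) = 0 := hωz 1 4 (by decide) (by simp)
  have t15 : ω (e 1) (e 5) = 0 := hωz 1 5 (by decide) (by simp)
  have t20 : ω (e 2) (e 0) = -(a13) := by rw [hanti, hω2]
  have t21 : ω (e 2) (e 1) = -(-a14) := by rw [hanti, hω4]
  have t22 : ω (e 2) (e 2) = 0 := hωalt _
  have t23 : ω (e 2) (e 3) = 0 := hωz 2 3 (by decide) (by simp)
  have t24 : ω (e 2) (e 4) = 0 := hωz 2 4 (by decide) (by simp)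
  have t25 : ω (e 2) (e 5) = 0 := hωz 2 5 (by decide) (by simp)
  have t30 : ω (e 3) (e 0) = -(a14) := by rw [hanti, hω3]
  have t31 : ω (e 3) (e 1) = 0 := by rw [hanti, hωz 1 3 (by decide) (by simp)]; ring
  have t32 : ω (e 3) (e 2) = 0 := by rw [hanti, hωz 2 3 (by decide) (by simp)]; ring
  have t33 : ω (e 3) (e 3) = 0 := hωalt _
  have t34 : ω (e 3) (e 4) = (a46^4 + 1)/(4*a46*a56^2) := hω5
  have t35 : ω (e 3) (e 5) = a46 := hω6
  have t40 : ω (e 4) (e 0) = 0 := by rw [hanti, hωz 0 4 (by decide) (by simp)]; ring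
  have t41 : ω (e 4) (e 1) = 0 := by rw [hanti, hωz 1 4 (by decide) (by simp)]; ring
  have t42 : ω (e 4) (e 2) = 0 := by rw [hanti, hωz 2 4 (by decide) (by simp)]; ring
  have t43 : ω (e 4) (e 3) = -((a46^4 + 1)/(4*a46*a56^2)) := by rw [hanti, hω5]
  have t44 : ω (e 4) (e 4) = 0 := hωalt _
  have t45 : ω (e 4) (e 5) = a56 := hω7
  have t50 : ω (e 5) (e 0) = 0 := by rw [hanti, hωz 0 5 (by decide) (by simp)]; ring
  have t51 : ω (e 5) (e 1) = 0 := by rw [hanti, hωz 1 5 (by decide) (by simp)]; ring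
  have t52 : ω (e 5) (e 2) = 0 := by rw [hanti, hωz 2 5 (by decide) (by simp)]; ring
  have t53 : ω (e 5) (e 3) = -(a46) := by rw [hanti, hω6]
  have t54 : ω (e 5) (e 4) = -(a56) := by rw [hanti, hω7]
  have t55 : ω (e 5) (e 5) = 0 := hωalt _
  have hbe : ∀ i : Fin 6, (Pi.basisFun ℝ (Fin 6)) i = e i := by
    intro i; simp [e]
  constructor
  · apply (Pi.basisFun ℝ (Fin 6)).ext
    intro i
    rw [hbe]
    have hi : i = 0 ∨ i = 1 ∨ i = 2 ∨ i = 3 ∨ i = 4 ∨ i = 5 := by omega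
    rcases hi with rfl | rfl | rfl | rfl | rfl | rfl <;>
      simp only [LinearMap.comp_apply, LinearMap.neg_apply, LinearMap.id_apply,
        hJ1, hJ2, hJ3, hJ4, hJ5, hJ6, map_add, map_sub, map_smul, map_neg] <;>
      (try simp only [hJ1, hJ2, hJ3, hJ4, hJ5, hJ6]) <;>
      (funext k;
       have hk : k = 0 ∨ k = 1 ∨ k = 2 ∨ k = 3 ∨ k = 4 ∨ k = 5 := by omega;
       rcases hk with rfl | rfl | rfl | rfl | rfl | rfl) <;>
      simp [e, Pi.single_apply] <;>
      (try field_simp) <;>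
      ring
  · have key : ω.compl₁₂ J J = ω := by
      apply LinearMap.ext_basis (Pi.basisFun ℝ (Fin 6)) (Pi.basisFun ℝ (Fin 6))
      intro i j
      rw [hbe, hbe]
      have hi : i = 0 ∨ i = 1 ∨ i = 2 ∨ i = 3 ∨ i = 4 ∨ i = 5 := by omega
      have hj : j = 0 ∨ j = 1 ∨ j = 2 ∨ j = 3 ∨ j = 4 ∨ j = 5 := by omega
      rcases hi with rfl | rfl | rfl | rfl | rfl | rfl <;>
        rcases hj with rfl | rfl | rfl | rfl | rfl | rfl <;>
        simp only [LinearMap.compl₁₂_apply, hJ1, hJ2, hJ3, hJ4, hJ5, hJ6,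
          map_add, map_sub, map_smul, map_neg, LinearMap.add_apply,
          LinearMap.sub_apply, LinearMap.smul_apply, LinearMap.neg_apply,
          smul_eq_mul, t00, t01, t02, t03, t04, t05, t10, t11, t12, t13, t14, t15, t20, t21, t22, t23, t24, t25, t30, t31, t32, t33, t34, t35, t40, t41, t42, t43, t44, t45, t50, t51, t52, t53, t54, t55] <;>
        (try field_simp) <;>
        ring
    intro X Y
    have h2 := LinearMap.congr_fun (LinearMap.congr_fun key X) Y
    simpa [LinearMap.compl₁₂_apply] using h2
end
end

section
/- The 2-form ω on 𝔤₂ is nondegenerate; the operator P satisfies P∘P = Id and ω(PX,PY) = −ω(X,Y) for all X,Y; the (+1)-eigenspace of P is span{e₂,e₄,e₅} and the (−1)-eigenspace is span{e₁,e₃,e₆}; neither eigenspace is closed under the Lie bracket of 𝔤₂; and the bilinear form g(X,Y) = ω(X,PY) is symmetric, nondegenerate, and of signature (3,3) (some basis diagonalizes g with exactly three positive and three negative diagonal entries). -/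
noncomputable section

open LinearMap Module

private lemma card_key (p : Fin 6 → Prop) (s : Finset (Fin 6)) (hps : {i | p i} = ↑s) :
    Nat.card {i : Fin 6 // p i} = s.card := by
  calc Nat.card {i : Fin 6 // p i} = ({i | p i} : Set (Fin 6)).ncard :=
        Nat.card_coe_set_eq _
    _ = (↑s : Set (Fin 6)).ncard := by rw [hps]
    _ = s.card := Set.ncard_coe_finset s

private lemma card_aux (f : Fin 6 → ℝ) (x y z : ℝ) (hx : x ≠ 0) (hy : y ≠ 0) (hz : z ≠ 0)
    (h0 : f 0 = 2*x) (h1 : f 1 = -(2*x)) (h2 : f 2 = -(2*y)) (h3 : f 3 = 2*y)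
    (h4 : f 4 = -(2*z)) (h5 : f 5 = 2*z) :
    Nat.card {i : Fin 6 // 0 < f i} = 3 ∧ Nat.card {i : Fin 6 // f i < 0} = 3 := by
  rcases hx.lt_or_gt with hx | hx <;> rcases hy.lt_or_gt with hy | hy <;>
      rcases hz.lt_or_gt with hz | hz
  · exact ⟨card_key _ {1,2,4} (by ext i; fin_cases i <;> simp [h0,h1,h2,h3,h4,h5] <;> linarith),
      card_key _ {0,3,5} (by ext i; fin_cases i <;> simp [h0,h1,h2,h3,h4,h5] <;> linarith)⟩
  · exact ⟨card_key _ {1,2,5} (by ext i; fin_cases i <;> simp [h0,h1,h2,h3,h4,h5] <;> linarith),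
      card_key _ {0,3,4} (by ext i; fin_cases i <;> simp [h0,h1,h2,h3,h4,h5] <;> linarith)⟩
  · exact ⟨card_key _ {1,3,4} (by ext i; fin_cases i <;> simp [h0,h1,h2,h3,h4,h5] <;> linarith),
      card_key _ {0,2,5} (by ext i; fin_cases i <;> simp [h0,h1,h2,h3,h4,h5] <;> linarith)⟩
  · exact ⟨card_key _ {1,3,5} (by ext i; fin_cases i <;> simp [h0,h1,h2,h3,h4,h5] <;> linarith),
      card_key _ {0,2,4} (by ext i; fin_cases i <;> simp [h0,h1,h2,h3,h4,h5] <;> linarith)⟩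
  · exact ⟨card_key _ {0,2,4} (by ext i; fin_cases i <;> simp [h0,h1,h2,h3,h4,h5] <;> linarith),
      card_key _ {1,3,5} (by ext i; fin_cases i <;> simp [h0,h1,h2,h3,h4,h5] <;> linarith)⟩
  · exact ⟨card_key _ {0,2,5} (by ext i; fin_cases i <;> simp [h0,h1,h2,h3,h4,h5] <;> linarith),
      card_key _ {1,3,4} (by ext i; fin_cases i <;> simp [h0,h1,h2,h3,h4,h5] <;> linarith)⟩
  · exact ⟨card_key _ {0,3,4} (by ext i; fin_cases i <;> simp [h0,h1,h2,h3,h4,h5] <;> linarith),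
      card_key _ {1,2,5} (by ext i; fin_cases i <;> simp [h0,h1,h2,h3,h4,h5] <;> linarith)⟩
  · exact ⟨card_key _ {0,3,5} (by ext i; fin_cases i <;> simp [h0,h1,h2,h3,h4,h5] <;> linarith),
      card_key _ {1,2,4} (by ext i; fin_cases i <;> simp [h0,h1,h2,h3,h4,h5] <;> linarith)⟩

set_option maxHeartbeats 2000000 in
theorem stmt_12
    (a12 a14 a15 a23 a46 : ℝ)
    (ha15 : a15 ≠ 0) (ha23 : a23 ≠ 0) (ha46 : a46 ≠ 0)
    (B : V →ₗ[ℝ] V →ₗ[ℝ] V)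
    (hBanti : ∀ X Y, B X Y = - B Y X)
    (hB1 : B (e 0) (e 1) = e 2)
    (hB2 : B (e 0) (e 2) = e 3)
    (hB3 : B (e 0) (e 3) = e 4)
    (hB4 : B (e 2) (e 3) = e 5)
    (hB5 : B (e 1) (e 4) = -e 5)
    (hBz : ∀ i j : Fin 6, i < j → (i, j) ∉ ({(0,1),(0,2),(0,3),(2,3),(1,4)} : Set (Fin 6 × Fin 6)) → B (e i) (e j) = 0)
    (ω : V →ₗ[ℝ] V →ₗ[ℝ] ℝ)
    (hωalt : ∀ X, ω X X = 0)
    (hω1 : ω (e 0) (e 1) = a12)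
    (hω2 : ω (e 0) (e 3) = a14)
    (hω3 : ω (e 0) (e 4) = a15)
    (hω4 : ω (e 1) (e 2) = a23)
    (hω5 : ω (e 3) (e 5) = a46)
    (hωz : ∀ i j : Fin 6, i < j → (i, j) ∉ ({(0,1),(0,3),(0,4),(1,2),(3,5)} : Set (Fin 6 × Fin 6)) → ω (e i) (e j) = 0)
    (P : Module.End ℝ V)
    (hP1 : P (e 0) = -e 0)
    (hP2 : P (e 1) = e 1)
    (hP3 : P (e 2) = -e 2)
    (hP4 : P (e 3) = e 3)
    (hP5 : P (e 4) = e 4)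
    (hP6 : P (e 5) = -e 5)
    (g : V →ₗ[ℝ] V →ₗ[ℝ] ℝ)
    (hg : ∀ X Y, g X Y = ω X (P Y))
    (Ep Em : Submodule ℝ V)
    (hEp : Ep = Submodule.span ℝ ({(e 1 : V), (e 3 : V), (e 4 : V)} : Set V))
    (hEm : Em = Submodule.span ℝ ({(e 0 : V), (e 2 : V), (e 5 : V)} : Set V)) :
    (∀ X : V, (∀ Y, ω X Y = 0) → X = 0) ∧
    P ∘ₗ P = LinearMap.id ∧
    (∀ X Y, ω (P X) (P Y) = - ω X Y) ∧
    Module.End.eigenspace P 1 = Ep ∧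
    Module.End.eigenspace P (-1) = Em ∧
    ¬ (∀ X ∈ Ep, ∀ Y ∈ Ep, B X Y ∈ Ep) ∧
    ¬ (∀ X ∈ Em, ∀ Y ∈ Em, B X Y ∈ Em) ∧
    (∀ X Y, g X Y = g Y X) ∧
    (∀ X : V, (∀ Y, g X Y = 0) → X = 0) ∧
    (∃ b : Basis (Fin 6) ℝ V,
      (∀ i j, i ≠ j → g (b i) (b j) = 0) ∧
      Nat.card {i : Fin 6 // 0 < g (b i) (b i)} = 3 ∧
      Nat.card {i : Fin 6 // g (b i) (b i) < 0} = 3) := by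
  classical
  have hanti : ∀ X Y : V, ω X Y = - ω Y X := by
    intro X Y
    have h := hωalt (X + Y)
    simp only [map_add, LinearMap.add_apply, hωalt] at h
    linarith
  have w00 : ω (e 0) (e 0) = 0 := hωalt _
  have w01 : ω (e 0) (e 1) = a12 := hω1
  have w02 : ω (e 0) (e 2) = 0 := hωz 0 2 (by decide) (by decide)
  have w03 : ω (e 0) (e 3) = a14 := hω2
  have w04 : ω (e 0) (e 4) = a15 := hω3
  have w05 : ω (e 0) (e 5) = 0 := hωz 0 5 (by decide) (by decide)
  have w10 : ω (e 1) (e 0) = -a12 := by rw [hanti, w01]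
  have w11 : ω (e 1) (e 1) = 0 := hωalt _
  have w12 : ω (e 1) (e 2) = a23 := hω4
  have w13 : ω (e 1) (e 3) = 0 := hωz 1 3 (by decide) (by decide)
  have w14 : ω (e 1) (e 4) = 0 := hωz 1 4 (by decide) (by decide)
  have w15 : ω (e 1) (e 5) = 0 := hωz 1 5 (by decide) (by decide)
  have w20 : ω (e 2) (e 0) = 0 := by rw [hanti, w02, neg_zero]
  have w21 : ω (e 2) (e 1) = -a23 := by rw [hanti, w12]
  have w22 : ω (e 2) (e 2) = 0 := hωalt _
  have w23 : ω (e 2) (e 3) = 0 := hωz 2 3 (by decide) (by decide)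
  have w24 : ω (e 2) (e 4) = 0 := hωz 2 4 (by decide) (by decide)
  have w25 : ω (e 2) (e 5) = 0 := hωz 2 5 (by decide) (by decide)
  have w30 : ω (e 3) (e 0) = -a14 := by rw [hanti, w03]
  have w31 : ω (e 3) (e 1) = 0 := by rw [hanti, w13, neg_zero]
  have w32 : ω (e 3) (e 2) = 0 := by rw [hanti, w23, neg_zero]
  have w33 : ω (e 3) (e 3) = 0 := hωalt _
  have w34 : ω (e 3) (e 4) = 0 := hωz 3 4 (by decide) (by decide)
  have w35 : ω (e 3) (e 5) = a46 := hω5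
  have w40 : ω (e 4) (e 0) = -a15 := by rw [hanti, w04]
  have w41 : ω (e 4) (e 1) = 0 := by rw [hanti, w14, neg_zero]
  have w42 : ω (e 4) (e 2) = 0 := by rw [hanti, w24, neg_zero]
  have w43 : ω (e 4) (e 3) = 0 := by rw [hanti, w34, neg_zero]
  have w44 : ω (e 4) (e 4) = 0 := hωalt _
  have w45 : ω (e 4) (e 5) = 0 := hωz 4 5 (by decide) (by decide)
  have w50 : ω (e 5) (e 0) = 0 := by rw [hanti, w05, neg_zero]
  have w51 : ω (e 5) (e 1) = 0 := by rw [hanti, w15, neg_zero]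
  have w52 : ω (e 5) (e 2) = 0 := by rw [hanti, w25, neg_zero]
  have w53 : ω (e 5) (e 3) = -a46 := by rw [hanti, w35]
  have w54 : ω (e 5) (e 4) = 0 := by rw [hanti, w45, neg_zero]
  have w55 : ω (e 5) (e 5) = 0 := hωalt _
  have hexp : ∀ X : V, X = ∑ i, X i • e i := by
    intro X
    conv_lhs => rw [← Finset.univ_sum_single X]
    refine Finset.sum_congr rfl fun i _ => ?_
    rw [e, ← Pi.single_smul, smul_eq_mul, mul_one]
  have hcore : ∀ X : V, (∀ j, ω X (e j) = 0) → X = 0 := by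
    intro X h
    have hc : ∀ j, ω X (e j) = ∑ i, X i * ω (e i) (e j) := by
      intro j
      conv_lhs => rw [hexp X]
      simp [map_sum, LinearMap.sum_apply, map_smul, LinearMap.smul_apply, smul_eq_mul]
    have c0 : X 0 = 0 := by
      have hh := h 4; rw [hc 4, Fin.sum_univ_six] at hh
      simp [w00, w01, w02, w03, w04, w05, w10, w11, w12, w13, w14, w15, w20, w21, w22, w23, w24, w25, w30, w31, w32, w33, w34, w35, w40, w41, w42, w43, w44, w45, w50, w51, w52, w53, w54, w55] at hh
      rcases hh with hh | hh
      · exact hh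
      · exact absurd hh ha15
    have c1 : X 1 = 0 := by
      have hh := h 2; rw [hc 2, Fin.sum_univ_six] at hh
      simp [w00, w01, w02, w03, w04, w05, w10, w11, w12, w13, w14, w15, w20, w21, w22, w23, w24, w25, w30, w31, w32, w33, w34, w35, w40, w41, w42, w43, w44, w45, w50, w51, w52, w53, w54, w55] at hh
      rcases hh with hh | hh
      · exact hh
      · exact absurd hh ha23
    have c3 : X 3 = 0 := by
      have hh := h 5; rw [hc 5, Fin.sum_univ_six] at hh
      simp [w00, w01, w02, w03, w04, w05, w10, w11, w12, w13, w14, w15, w20, w21, w22, w23, w24, w25, w30, w31, w32, w33, w34, w35, w40, w41, w42, w43, w44, w45, w50, w51, w52, w53, w54, w55] at hh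
      rcases hh with hh | hh
      · exact hh
      · exact absurd hh ha46
    have c2 : X 2 = 0 := by
      have hh := h 1; rw [hc 1, Fin.sum_univ_six] at hh
      simp [w00, w01, w02, w03, w04, w05, w10, w11, w12, w13, w14, w15, w20, w21, w22, w23, w24, w25, w30, w31, w32, w33, w34, w35, w40, w41, w42, w43, w44, w45, w50, w51, w52, w53, w54, w55, c0] at hh
      rcases hh with hh | hh
      · exact hh
      · exact absurd hh ha23
    have c5 : X 5 = 0 := by
      have hh := h 3; rw [hc 3, Fin.sum_univ_six] at hh
      simp [w00, w01, w02, w03, w04, w05, w10, w11, w12, w13, w14, w15, w20, w21, w22, w23, w24, w25, w30, w31, w32, w33, w34, w35, w40, w41, w42, w43, w44, w45, w50, w51, w52, w53, w54, w55, c0] at hh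
      rcases hh with hh | hh
      · exact hh
      · exact absurd hh ha46
    have c4 : X 4 = 0 := by
      have hh := h 0; rw [hc 0, Fin.sum_univ_six] at hh
      simp [w00, w01, w02, w03, w04, w05, w10, w11, w12, w13, w14, w15, w20, w21, w22, w23, w24, w25, w30, w31, w32, w33, w34, w35, w40, w41, w42, w43, w44, w45, w50, w51, w52, w53, w54, w55, c1, c3] at hh
      rcases hh with hh | hh
      · exact hh
      · exact absurd hh ha15
    funext j
    fin_cases j
    · simpa using c0
    · simpa using c1
    · simpa using c2
    · simpa using c3
    · simpa using c4
    · simpa using c5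
  have hbe : ∀ i : Fin 6, (Pi.basisFun ℝ (Fin 6)) i = e i := fun i => by
    simp [Pi.basisFun_apply, e]
  have hgsymm : ∀ X Y, g X Y = g Y X := by
    have key2 : g = g.flip := by
      refine LinearMap.ext_basis (Pi.basisFun ℝ (Fin 6)) (Pi.basisFun ℝ (Fin 6)) fun i j => ?_
      fin_cases i <;> fin_cases j <;>
        simp [hbe, LinearMap.flip_apply, hg, hP1, hP2, hP3, hP4, hP5, hP6, map_neg, w00, w01, w02, w03, w04, w05, w10, w11, w12, w13, w14, w15, w20, w21, w22, w23, w24, w25, w30, w31, w32, w33, w34, w35, w40, w41, w42, w43, w44, w45, w50, w51, w52, w53, w54, w55]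
    intro X Y
    have hk := LinearMap.congr_fun₂ key2 X Y
    simpa only [LinearMap.flip_apply] using hk
  -- decomposition of P X
  have hPX : ∀ X : V, P X = X 0 • P (e 0) + X 1 • P (e 1) + X 2 • P (e 2) + X 3 • P (e 3)
      + X 4 • P (e 4) + X 5 • P (e 5) := by
    intro X
    conv_lhs => rw [hexp X]
    rw [map_sum, Fin.sum_univ_six]
    simp only [map_smul]
  refine ⟨?_, ?_, ?_, ?_, ?_, ?_, ?_, hgsymm, ?_, ?_⟩
  · -- ω nondegenerate
    intro X hXY
    exact hcore X fun j => hXY (e j)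
  · -- P ∘ P = id
    refine (Pi.basisFun ℝ (Fin 6)).ext fun i => ?_
    fin_cases i <;>
      simp [hbe, LinearMap.comp_apply, hP1, hP2, hP3, hP4, hP5, hP6, map_neg]
  · -- ω (P X) (P Y) = - ω X Y
    have key : (ω ∘ₗ P).compl₂ P = -ω := by
      refine LinearMap.ext_basis (Pi.basisFun ℝ (Fin 6)) (Pi.basisFun ℝ (Fin 6)) fun i j => ?_
      fin_cases i <;> fin_cases j <;>
        simp [hbe, LinearMap.compl₂_apply, LinearMap.comp_apply, LinearMap.neg_apply,
          hP1, hP2, hP3, hP4, hP5, hP6, map_neg, LinearMap.neg_apply, w00, w01, w02, w03, w04, w05, w10, w11, w12, w13, w14, w15, w20, w21, w22, w23, w24, w25, w30, w31, w32, w33, w34, w35, w40, w41, w42, w43, w44, w45, w50, w51, w52, w53, w54, w55]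
    intro X Y
    have hk := LinearMap.congr_fun₂ key X Y
    simpa only [LinearMap.compl₂_apply, LinearMap.comp_apply, LinearMap.neg_apply] using hk
  · -- eigenspace 1
    apply le_antisymm
    · intro X hX
      rw [Module.End.mem_eigenspace_iff, one_smul] at hX
      have hs := hPX X
      rw [hX, hP1, hP2, hP3, hP4, hP5, hP6] at hs
      have h0 := congrFun hs 0
      have h2 := congrFun hs 2
      have h5 := congrFun hs 5
      simp [e, Pi.single_apply] at h0 h2 h5
      rw [hEp]
      have hX134 : X = X 1 • e 1 + (X 3 • e 3 + X 4 • e 4) := by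
        conv_lhs => rw [hexp X]
        rw [Fin.sum_univ_six]
        rw [show X 0 = 0 by linarith, show X 2 = 0 by linarith, show X 5 = 0 by linarith]
        simp only [zero_smul, zero_add, add_zero]
        abel
      rw [hX134]
      exact Submodule.add_mem _ (Submodule.smul_mem _ _ (Submodule.subset_span (by simp)))
        (Submodule.add_mem _ (Submodule.smul_mem _ _ (Submodule.subset_span (by simp)))
          (Submodule.smul_mem _ _ (Submodule.subset_span (by simp))))
    · rw [hEp, Submodule.span_le]
      rintro x hx
      simp only [Set.mem_insert_iff, Set.mem_singleton_iff] at hx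
      rcases hx with rfl | rfl | rfl <;>
        · rw [SetLike.mem_coe, Module.End.mem_eigenspace_iff, one_smul]
          first | exact hP2 | exact hP4 | exact hP5
  · -- eigenspace -1
    apply le_antisymm
    · intro X hX
      rw [Module.End.mem_eigenspace_iff] at hX
      rw [show ((-1 : ℝ) • X) = -X by simp] at hX
      have hs := hPX X
      rw [hX, hP1, hP2, hP3, hP4, hP5, hP6] at hs
      have h1 := congrFun hs 1
      have h3 := congrFun hs 3
      have h4 := congrFun hs 4
      simp [e, Pi.single_apply] at h1 h3 h4
      rw [hEm]
      have hX025 : X = X 0 • e 0 + (X 2 • e 2 + X 5 • e 5) := by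
        conv_lhs => rw [hexp X]
        rw [Fin.sum_univ_six]
        rw [show X 1 = 0 by linarith, show X 3 = 0 by linarith, show X 4 = 0 by linarith]
        simp only [zero_smul, zero_add, add_zero]
        abel
      rw [hX025]
      exact Submodule.add_mem _ (Submodule.smul_mem _ _ (Submodule.subset_span (by simp)))
        (Submodule.add_mem _ (Submodule.smul_mem _ _ (Submodule.subset_span (by simp)))
          (Submodule.smul_mem _ _ (Submodule.subset_span (by simp))))
    · rw [hEm, Submodule.span_le]
      rintro x hx
      simp only [Set.mem_insert_iff, Set.mem_singleton_iff] at hx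
      rcases hx with rfl | rfl | rfl <;>
        · rw [SetLike.mem_coe, Module.End.mem_eigenspace_iff]
          rw [show ∀ y : V, (-1 : ℝ) • y = -y from fun y => by simp]
          first | exact hP1 | exact hP3 | exact hP6
  · -- Ep not closed
    intro hcl
    have he1 : (e 1 : V) ∈ Ep := by
      rw [hEp]; exact Submodule.subset_span (by simp)
    have he4 : (e 4 : V) ∈ Ep := by
      rw [hEp]; exact Submodule.subset_span (by simp)
    have h14 := hcl (e 1) he1 (e 4) he4
    rw [hB5, hEp] at h14
    have hle : Submodule.span ℝ ({(e 1 : V), e 3, e 4} : Set V) ≤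
        LinearMap.ker (LinearMap.proj (R := ℝ) (φ := fun _ : Fin 6 => ℝ) 5) := by
      rw [Submodule.span_le]
      rintro x hx
      simp only [Set.mem_insert_iff, Set.mem_singleton_iff] at hx
      rcases hx with rfl | rfl | rfl <;> simp [LinearMap.mem_ker, e, Pi.single_apply]
    have h5 := hle h14
    simp [LinearMap.mem_ker, e, Pi.single_apply] at h5
  · -- Em not closed
    intro hcl
    have he0 : (e 0 : V) ∈ Em := by
      rw [hEm]; exact Submodule.subset_span (by simp)
    have he2 : (e 2 : V) ∈ Em := by
      rw [hEm]; exact Submodule.subset_span (by simp)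
    have h02 := hcl (e 0) he0 (e 2) he2
    rw [hB2, hEm] at h02
    have hle : Submodule.span ℝ ({(e 0 : V), e 2, e 5} : Set V) ≤
        LinearMap.ker (LinearMap.proj (R := ℝ) (φ := fun _ : Fin 6 => ℝ) 3) := by
      rw [Submodule.span_le]
      rintro x hx
      simp only [Set.mem_insert_iff, Set.mem_singleton_iff] at hx
      rcases hx with rfl | rfl | rfl <;> simp [LinearMap.mem_ker, e, Pi.single_apply]
    have h3 := hle h02
    simp [LinearMap.mem_ker, e, Pi.single_apply] at h3
  · -- g nondegenerate
    intro X h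
    refine hcore X fun j => ?_
    fin_cases j
    · simpa [hg, hP1] using h (e 0)
    · simpa [hg, hP2] using h (e 1)
    · simpa [hg, hP3] using h (e 2)
    · simpa [hg, hP4] using h (e 3)
    · simpa [hg, hP5] using h (e 4)
    · simpa [hg, hP6] using h (e 5)
  · -- diagonalizing basis
    have o01 : g (e 0 + e 4) (e 0 - e 4) = 0 := by simp [hg, map_add, map_sub, map_smul, smul_eq_mul, hP1, hP2, hP3, hP4, hP5, hP6, w00, w01, w02, w03, w04, w05, w10, w11, w12, w13, w14, w15, w20, w21, w22, w23, w24, w25, w30, w31, w32, w33, w34, w35, w40, w41, w42, w43, w44, w45, w50, w51, w52, w53, w54, w55, mul_inv_cancel_right₀ ha15, div_mul_cancel₀ _ ha15] <;> (first | ring | (field_simp; ring))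
    have o02 : g (e 0 + e 4) (e 1 - (a12/a15) • e 4 + e 2) = 0 := by simp [hg, map_add, map_sub, map_smul, smul_eq_mul, hP1, hP2, hP3, hP4, hP5, hP6, w00, w01, w02, w03, w04, w05, w10, w11, w12, w13, w14, w15, w20, w21, w22, w23, w24, w25, w30, w31, w32, w33, w34, w35, w40, w41, w42, w43, w44, w45, w50, w51, w52, w53, w54, w55, mul_inv_cancel_right₀ ha15, div_mul_cancel₀ _ ha15] <;> (first | ring | (field_simp; ring))
    have o03 : g (e 0 + e 4) (e 1 - (a12/a15) • e 4 - e 2) = 0 := by simp [hg, map_add, map_sub, map_smul, smul_eq_mul, hP1, hP2, hP3, hP4, hP5, hP6, w00, w01, w02, w03, w04, w05, w10, w11, w12, w13, w14, w15, w20, w21, w22, w23, w24, w25, w30, w31, w32, w33, w34, w35, w40, w41, w42, w43, w44, w45, w50, w51, w52, w53, w54, w55, mul_inv_cancel_right₀ ha15, div_mul_cancel₀ _ ha15] <;> (first | ring | (field_simp; ring))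
    have o04 : g (e 0 + e 4) (e 3 - (a14/a15) • e 4 + e 5) = 0 := by simp [hg, map_add, map_sub, map_smul, smul_eq_mul, hP1, hP2, hP3, hP4, hP5, hP6, w00, w01, w02, w03, w04, w05, w10, w11, w12, w13, w14, w15, w20, w21, w22, w23, w24, w25, w30, w31, w32, w33, w34, w35, w40, w41, w42, w43, w44, w45, w50, w51, w52, w53, w54, w55, mul_inv_cancel_right₀ ha15, div_mul_cancel₀ _ ha15] <;> (first | ring | (field_simp; ring))
    have o05 : g (e 0 + e 4) (e 3 - (a14/a15) • e 4 - e 5) = 0 := by simp [hg, map_add, map_sub, map_smul, smul_eq_mul, hP1, hP2, hP3, hP4, hP5, hP6, w00, w01, w02, w03, w04, w05, w10, w11, w12, w13, w14, w15, w20, w21, w22, w23, w24, w25, w30, w31, w32, w33, w34, w35, w40, w41, w42, w43, w44, w45, w50, w51, w52, w53, w54, w55, mul_inv_cancel_right₀ ha15, div_mul_cancel₀ _ ha15] <;> (first | ring | (field_simp; ring))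
    have o12 : g (e 0 - e 4) (e 1 - (a12/a15) • e 4 + e 2) = 0 := by simp [hg, map_add, map_sub, map_smul, smul_eq_mul, hP1, hP2, hP3, hP4, hP5, hP6, w00, w01, w02, w03, w04, w05, w10, w11, w12, w13, w14, w15, w20, w21, w22, w23, w24, w25, w30, w31, w32, w33, w34, w35, w40, w41, w42, w43, w44, w45, w50, w51, w52, w53, w54, w55, mul_inv_cancel_right₀ ha15, div_mul_cancel₀ _ ha15] <;> (first | ring | (field_simp; ring))
    have o13 : g (e 0 - e 4) (e 1 - (a12/a15) • e 4 - e 2) = 0 := by simp [hg, map_add, map_sub, map_smul, smul_eq_mul, hP1, hP2, hP3, hP4, hP5, hP6, w00, w01, w02, w03, w04, w05, w10, w11, w12, w13, w14, w15, w20, w21, w22, w23, w24, w25, w30, w31, w32, w33, w34, w35, w40, w41, w42, w43, w44, w45, w50, w51, w52, w53, w54, w55, mul_inv_cancel_right₀ ha15, div_mul_cancel₀ _ ha15] <;> (first | ring | (field_simp; ring))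
    have o14 : g (e 0 - e 4) (e 3 - (a14/a15) • e 4 + e 5) = 0 := by simp [hg, map_add, map_sub, map_smul, smul_eq_mul, hP1, hP2, hP3, hP4, hP5, hP6, w00, w01, w02, w03, w04, w05, w10, w11, w12, w13, w14, w15, w20, w21, w22, w23, w24, w25, w30, w31, w32, w33, w34, w35, w40, w41, w42, w43, w44, w45, w50, w51, w52, w53, w54, w55, mul_inv_cancel_right₀ ha15, div_mul_cancel₀ _ ha15] <;> (first | ring | (field_simp; ring))
    have o15 : g (e 0 - e 4) (e 3 - (a14/a15) • e 4 - e 5) = 0 := by simp [hg, map_add, map_sub, map_smul, smul_eq_mul, hP1, hP2, hP3, hP4, hP5, hP6, w00, w01, w02, w03, w04, w05, w10, w11, w12, w13, w14, w15, w20, w21, w22, w23, w24, w25, w30, w31, w32, w33, w34, w35, w40, w41, w42, w43, w44, w45, w50, w51, w52, w53, w54, w55, mul_inv_cancel_right₀ ha15, div_mul_cancel₀ _ ha15] <;> (first | ring | (field_simp; ring))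
    have o23 : g (e 1 - (a12/a15) • e 4 + e 2) (e 1 - (a12/a15) • e 4 - e 2) = 0 := by simp [hg, map_add, map_sub, map_smul, smul_eq_mul, hP1, hP2, hP3, hP4, hP5, hP6, w00, w01, w02, w03, w04, w05, w10, w11, w12, w13, w14, w15, w20, w21, w22, w23, w24, w25, w30, w31, w32, w33, w34, w35, w40, w41, w42, w43, w44, w45, w50, w51, w52, w53, w54, w55, mul_inv_cancel_right₀ ha15, div_mul_cancel₀ _ ha15] <;> (first | ring | (field_simp; ring))
    have o24 : g (e 1 - (a12/a15) • e 4 + e 2) (e 3 - (a14/a15) • e 4 + e 5) = 0 := by simp [hg, map_add, map_sub, map_smul, smul_eq_mul, hP1, hP2, hP3, hP4, hP5, hP6, w00, w01, w02, w03, w04, w05, w10, w11, w12, w13, w14, w15, w20, w21, w22, w23, w24, w25, w30, w31, w32, w33, w34, w35, w40, w41, w42, w43, w44, w45, w50, w51, w52, w53, w54, w55, mul_inv_cancel_right₀ ha15, div_mul_cancel₀ _ ha15] <;> (first | ring | (field_simp; ring))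
    have o25 : g (e 1 - (a12/a15) • e 4 + e 2) (e 3 - (a14/a15) • e 4 - e 5) = 0 := by simp [hg, map_add, map_sub, map_smul, smul_eq_mul, hP1, hP2, hP3, hP4, hP5, hP6, w00, w01, w02, w03, w04, w05, w10, w11, w12, w13, w14, w15, w20, w21, w22, w23, w24, w25, w30, w31, w32, w33, w34, w35, w40, w41, w42, w43, w44, w45, w50, w51, w52, w53, w54, w55, mul_inv_cancel_right₀ ha15, div_mul_cancel₀ _ ha15] <;> (first | ring | (field_simp; ring))
    have o34 : g (e 1 - (a12/a15) • e 4 - e 2) (e 3 - (a14/a15) • e 4 + e 5) = 0 := by simp [hg, map_add, map_sub, map_smul, smul_eq_mul, hP1, hP2, hP3, hP4, hP5, hP6, w00, w01, w02, w03, w04, w05, w10, w11, w12, w13, w14, w15, w20, w21, w22, w23, w24, w25, w30, w31, w32, w33, w34, w35, w40, w41, w42, w43, w44, w45, w50, w51, w52, w53, w54, w55, mul_inv_cancel_right₀ ha15, div_mul_cancel₀ _ ha15] <;> (first | ring | (field_simp; ring))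
    have o35 : g (e 1 - (a12/a15) • e 4 - e 2) (e 3 - (a14/a15) • e 4 - e 5) = 0 := by simp [hg, map_add, map_sub, map_smul, smul_eq_mul, hP1, hP2, hP3, hP4, hP5, hP6, w00, w01, w02, w03, w04, w05, w10, w11, w12, w13, w14, w15, w20, w21, w22, w23, w24, w25, w30, w31, w32, w33, w34, w35, w40, w41, w42, w43, w44, w45, w50, w51, w52, w53, w54, w55, mul_inv_cancel_right₀ ha15, div_mul_cancel₀ _ ha15] <;> (first | ring | (field_simp; ring))
    have o45 : g (e 3 - (a14/a15) • e 4 + e 5) (e 3 - (a14/a15) • e 4 - e 5) = 0 := by simp [hg, map_add, map_sub, map_smul, smul_eq_mul, hP1, hP2, hP3, hP4, hP5, hP6, w00, w01, w02, w03, w04, w05, w10, w11, w12, w13, w14, w15, w20, w21, w22, w23, w24, w25, w30, w31, w32, w33, w34, w35, w40, w41, w42, w43, w44, w45, w50, w51, w52, w53, w54, w55, mul_inv_cancel_right₀ ha15, div_mul_cancel₀ _ ha15] <;> (first | ring | (field_simp; ring))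
    have d0 : g (e 0 + e 4) (e 0 + e 4) = 2*a15 := by simp [hg, map_add, map_sub, map_smul, smul_eq_mul, hP1, hP2, hP3, hP4, hP5, hP6, w00, w01, w02, w03, w04, w05, w10, w11, w12, w13, w14, w15, w20, w21, w22, w23, w24, w25, w30, w31, w32, w33, w34, w35, w40, w41, w42, w43, w44, w45, w50, w51, w52, w53, w54, w55, mul_inv_cancel_right₀ ha15, div_mul_cancel₀ _ ha15] <;> (first | ring | (field_simp; ring))
    have d1 : g (e 0 - e 4) (e 0 - e 4) = -(2*a15) := by simp [hg, map_add, map_sub, map_smul, smul_eq_mul, hP1, hP2, hP3, hP4, hP5, hP6, w00, w01, w02, w03, w04, w05, w10, w11, w12, w13, w14, w15, w20, w21, w22, w23, w24, w25, w30, w31, w32, w33, w34, w35, w40, w41, w42, w43, w44, w45, w50, w51, w52, w53, w54, w55, mul_inv_cancel_right₀ ha15, div_mul_cancel₀ _ ha15] <;> (first | ring | (field_simp; ring))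
    have d2 : g (e 1 - (a12/a15) • e 4 + e 2) (e 1 - (a12/a15) • e 4 + e 2) = -(2*a23) := by simp [hg, map_add, map_sub, map_smul, smul_eq_mul, hP1, hP2, hP3, hP4, hP5, hP6, w00, w01, w02, w03, w04, w05, w10, w11, w12, w13, w14, w15, w20, w21, w22, w23, w24, w25, w30, w31, w32, w33, w34, w35, w40, w41, w42, w43, w44, w45, w50, w51, w52, w53, w54, w55, mul_inv_cancel_right₀ ha15, div_mul_cancel₀ _ ha15] <;> (first | ring | (field_simp; ring))
    have d3 : g (e 1 - (a12/a15) • e 4 - e 2) (e 1 - (a12/a15) • e 4 - e 2) = 2*a23 := by simp [hg, map_add, map_sub, map_smul, smul_eq_mul, hP1, hP2, hP3, hP4, hP5, hP6, w00, w01, w02, w03, w04, w05, w10, w11, w12, w13, w14, w15, w20, w21, w22, w23, w24, w25, w30, w31, w32, w33, w34, w35, w40, w41, w42, w43, w44, w45, w50, w51, w52, w53, w54, w55, mul_inv_cancel_right₀ ha15, div_mul_cancel₀ _ ha15] <;> (first | ring | (field_simp; ring))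
    have d4 : g (e 3 - (a14/a15) • e 4 + e 5) (e 3 - (a14/a15) • e 4 + e 5) = -(2*a46) := by simp [hg, map_add, map_sub, map_smul, smul_eq_mul, hP1, hP2, hP3, hP4, hP5, hP6, w00, w01, w02, w03, w04, w05, w10, w11, w12, w13, w14, w15, w20, w21, w22, w23, w24, w25, w30, w31, w32, w33, w34, w35, w40, w41, w42, w43, w44, w45, w50, w51, w52, w53, w54, w55, mul_inv_cancel_right₀ ha15, div_mul_cancel₀ _ ha15] <;> (first | ring | (field_simp; ring))
    have d5 : g (e 3 - (a14/a15) • e 4 - e 5) (e 3 - (a14/a15) • e 4 - e 5) = 2*a46 := by simp [hg, map_add, map_sub, map_smul, smul_eq_mul, hP1, hP2, hP3, hP4, hP5, hP6, w00, w01, w02, w03, w04, w05, w10, w11, w12, w13, w14, w15, w20, w21, w22, w23, w24, w25, w30, w31, w32, w33, w34, w35, w40, w41, w42, w43, w44, w45, w50, w51, w52, w53, w54, w55, mul_inv_cancel_right₀ ha15, div_mul_cancel₀ _ ha15] <;> (first | ring | (field_simp; ring))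
    have hOI : LinearMap.IsOrthoᵢ g (![(e 0 + e 4), (e 0 - e 4), (e 1 - (a12/a15) • e 4 + e 2), (e 1 - (a12/a15) • e 4 - e 2), (e 3 - (a14/a15) • e 4 + e 5), (e 3 - (a14/a15) • e 4 - e 5)] : Fin 6 → V) := by
      rw [LinearMap.isOrthoᵢ_def]
      intro i j hij
      fin_cases i <;> fin_cases j <;>
        first
        | exact absurd rfl hij
        | exact o01
        | exact o02
        | exact o03
        | exact o04
        | exact o05
        | exact o12
        | exact o13
        | exact o14
        | exact o15
        | exact o23
        | exact o24
        | exact o25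
        | exact o34
        | exact o35
        | exact o45
        | exact (hgsymm _ _).trans o01
        | exact (hgsymm _ _).trans o02
        | exact (hgsymm _ _).trans o03
        | exact (hgsymm _ _).trans o04
        | exact (hgsymm _ _).trans o05
        | exact (hgsymm _ _).trans o12
        | exact (hgsymm _ _).trans o13
        | exact (hgsymm _ _).trans o14
        | exact (hgsymm _ _).trans o15
        | exact (hgsymm _ _).trans o23
        | exact (hgsymm _ _).trans o24
        | exact (hgsymm _ _).trans o25
        | exact (hgsymm _ _).trans o34
        | exact (hgsymm _ _).trans o35
        | exact (hgsymm _ _).trans o45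
    have hdne : ∀ i : Fin 6, ¬ LinearMap.IsOrtho g ((![(e 0 + e 4), (e 0 - e 4), (e 1 - (a12/a15) • e 4 + e 2), (e 1 - (a12/a15) • e 4 - e 2), (e 3 - (a14/a15) • e 4 + e 5), (e 3 - (a14/a15) • e 4 - e 5)] : Fin 6 → V) i) ((![(e 0 + e 4), (e 0 - e 4), (e 1 - (a12/a15) • e 4 + e 2), (e 1 - (a12/a15) • e 4 - e 2), (e 3 - (a14/a15) • e 4 + e 5), (e 3 - (a14/a15) • e 4 - e 5)] : Fin 6 → V) i) := by
      intro i
      fin_cases i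
      · exact fun hcon => ha15 (by have h := d0.symm.trans (LinearMap.isOrtho_def.mp hcon); linarith)
      · exact fun hcon => ha15 (by have h := d1.symm.trans (LinearMap.isOrtho_def.mp hcon); linarith)
      · exact fun hcon => ha23 (by have h := d2.symm.trans (LinearMap.isOrtho_def.mp hcon); linarith)
      · exact fun hcon => ha23 (by have h := d3.symm.trans (LinearMap.isOrtho_def.mp hcon); linarith)
      · exact fun hcon => ha46 (by have h := d4.symm.trans (LinearMap.isOrtho_def.mp hcon); linarith)
      · exact fun hcon => ha46 (by have h := d5.symm.trans (LinearMap.isOrtho_def.mp hcon); linarith)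
    have hli : LinearIndependent ℝ (![(e 0 + e 4), (e 0 - e 4), (e 1 - (a12/a15) • e 4 + e 2), (e 1 - (a12/a15) • e 4 - e 2), (e 3 - (a14/a15) • e 4 + e 5), (e 3 - (a14/a15) • e 4 - e 5)] : Fin 6 → V) :=
      LinearMap.linearIndependent_of_isOrthoᵢ hOI hdne
    have hcard : Fintype.card (Fin 6) = Module.finrank ℝ V := by
      simp [Module.finrank_pi]
    refine ⟨basisOfLinearIndependentOfCardEqFinrank hli hcard, ?_, ?_, ?_⟩
    · intro i j hij
      rw [coe_basisOfLinearIndependentOfCardEqFinrank]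
      fin_cases i <;> fin_cases j <;>
        first
        | exact absurd rfl hij
        | exact o01
        | exact o02
        | exact o03
        | exact o04
        | exact o05
        | exact o12
        | exact o13
        | exact o14
        | exact o15
        | exact o23
        | exact o24
        | exact o25
        | exact o34
        | exact o35
        | exact o45
        | exact (hgsymm _ _).trans o01
        | exact (hgsymm _ _).trans o02
        | exact (hgsymm _ _).trans o03
        | exact (hgsymm _ _).trans o04
        | exact (hgsymm _ _).trans o05
        | exact (hgsymm _ _).trans o12
        | exact (hgsymm _ _).trans o13
        | exact (hgsymm _ _).trans o14
        | exact (hgsymm _ _).trans o15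
        | exact (hgsymm _ _).trans o23
        | exact (hgsymm _ _).trans o24
        | exact (hgsymm _ _).trans o25
        | exact (hgsymm _ _).trans o34
        | exact (hgsymm _ _).trans o35
        | exact (hgsymm _ _).trans o45
    · exact (card_aux (fun i => g ((basisOfLinearIndependentOfCardEqFinrank hli hcard) i)
        ((basisOfLinearIndependentOfCardEqFinrank hli hcard) i)) a15 a23 a46 ha15 ha23 ha46
        (by rw [coe_basisOfLinearIndependentOfCardEqFinrank]; exact d0)
        (by rw [coe_basisOfLinearIndependentOfCardEqFinrank]; exact d1)
        (by rw [coe_basisOfLinearIndependentOfCardEqFinrank]; exact d2)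
        (by rw [coe_basisOfLinearIndependentOfCardEqFinrank]; exact d3)
        (by rw [coe_basisOfLinearIndependentOfCardEqFinrank]; exact d4)
        (by rw [coe_basisOfLinearIndependentOfCardEqFinrank]; exact d5)).1
    · exact (card_aux (fun i => g ((basisOfLinearIndependentOfCardEqFinrank hli hcard) i)
        ((basisOfLinearIndependentOfCardEqFinrank hli hcard) i)) a15 a23 a46 ha15 ha23 ha46
        (by rw [coe_basisOfLinearIndependentOfCardEqFinrank]; exact d0)
        (by rw [coe_basisOfLinearIndependentOfCardEqFinrank]; exact d1)
        (by rw [coe_basisOfLinearIndependentOfCardEqFinrank]; exact d2)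
        (by rw [coe_basisOfLinearIndependentOfCardEqFinrank]; exact d3)
        (by rw [coe_basisOfLinearIndependentOfCardEqFinrank]; exact d4)
        (by rw [coe_basisOfLinearIndependentOfCardEqFinrank]; exact d5)).2
end
end

section
/- The 2-form ω on 𝔤₄ is nondegenerate; the operator P satisfies P∘P = Id and ω(PX,PY) = −ω(X,Y) for all X,Y; the (+1)-eigenspace of P is span{e₃,e₄,e₅} and the (−1)-eigenspace is span{e₁,e₂,e₆}; neither eigenspace is closed under the Lie bracket of 𝔤₄; and the bilinear form g(X,Y) = ω(X,PY) is symmetric, nondegenerate, and of signature (3,3) (some basis diagonalizes g with exactly three positive and three negative diagonal entries). -/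
noncomputable section

open LinearMap Module

/-!
ω and P are determined by their values on the basis: ω is an explicit coordinate form and P a
diagonal matrix of signs. Since P is an involution with ω(PX, PY) = -ω(X, Y), the form
g(X, Y) = ω(X, PY) is symmetric. Both eigenspaces of P are g-isotropic, and a triangular change
of basis inside them gives three hyperbolic pairs (uᵢ, vᵢ) with g(uᵢ, vⱼ) = 0 for i ≠ j and
g(uᵢ, vᵢ) ≠ 0. The six vectors uᵢ ± vᵢ are then g-orthogonal with g-lengths ±2 g(uᵢ, vᵢ), three
of each sign; this basis also shows that g, and hence ω, is nondegenerate. The eigenspaces are not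
subalgebras because [e₃, e₅] = e₆ and [e₁, e₂] = e₄ leave them.
-/

namespace LinearMap

variable {R M N ι : Type*} [CommRing R] [AddCommGroup M] [Module R M] [AddCommGroup N] [Module R N]

theorem ext_basis_of_isAlt [LinearOrder ι] (b : Basis ι R M) {B B' : M →ₗ[R] M →ₗ[R] N}
    (hB : B.IsAlt) (hB' : B'.IsAlt) (h : ∀ i j, i < j → B (b i) (b j) = B' (b i) (b j)) :
    B = B' := by
  refine ext_basis b b fun i j => ?_
  rcases lt_trichotomy i j with hij | rfl | hij
  · exact h i j hij
  · rw [hB, hB']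
  · rw [← hB.neg, ← hB'.neg, h j i hij]

theorem IsAlt.apply_apply_comm {ω : M →ₗ[R] M →ₗ[R] R} {P : End R M} (hω : ω.IsAlt)
    (hPP : ∀ X, P (P X) = X) (hPω : ∀ X Y, ω (P X) (P Y) = -ω X Y) (X Y : M) :
    ω X (P Y) = ω Y (P X) :=
  calc ω X (P Y) = -ω (P X) (P (P Y)) := by rw [hPω, neg_neg]
    _ = ω Y (P X) := by rw [hPP, hω.neg]

end LinearMap

namespace Matrix

variable {K ι : Type*} [Field K] [Fintype ι] [DecidableEq ι]

theorem toLin'_diagonal_eq {R : Type*} [CommSemiring R] {P : End R (ι → R)} {s : ι → R}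
    (h : ∀ i, P (Pi.single i 1) = s i • Pi.single i 1) : P = toLin' (diagonal s) := by
  refine (Pi.basisFun R ι).ext fun i => ?_
  ext j
  rw [Pi.basisFun_apply, h, toLin'_apply, mulVec_diagonal]
  by_cases hij : i = j <;> simp [hij]

theorem mem_eigenspace_toLin'_diagonal_iff {s : ι → K} {μ : K} {X : ι → K} :
    X ∈ End.eigenspace (toLin' (diagonal s)) μ ↔ ∀ i, s i ≠ μ → X i = 0 := by
  rw [End.mem_eigenspace_iff, toLin'_apply, funext_iff]
  refine forall_congr' fun i => ?_
  rw [mulVec_diagonal, Pi.smul_apply, smul_eq_mul, ← sub_eq_zero, ← sub_mul, mul_eq_zero,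
    sub_eq_zero]
  tauto

theorem mem_span_image_single_iff {S : Set ι} {X : ι → K} :
    X ∈ Submodule.span K ((fun i => Pi.single i 1) '' S) ↔ ∀ i ∉ S, X i = 0 := by
  have := (Pi.basisFun K ι).mem_span_image (m := X) (s := S)
  simp only [Pi.basisFun_apply] at this
  rw [this]
  simp [Set.subset_def, not_imp_comm]

theorem single_mem_eigenspace_toLin'_diagonal_iff {s : ι → K} {μ : K} {i : ι} :
    Pi.single i 1 ∈ End.eigenspace (toLin' (diagonal s)) μ ↔ s i = μ := by
  rw [mem_eigenspace_toLin'_diagonal_iff]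
  refine ⟨fun h => by_contra fun hne => by simpa using h i hne, fun h j hj => ?_⟩
  rw [Pi.single_apply, if_neg]
  rintro rfl
  exact hj h

theorem eigenspace_toLin'_diagonal (s : ι → K) (μ : K) :
    End.eigenspace (toLin' (diagonal s)) μ =
      Submodule.span K ((fun i => Pi.single i 1) '' {i | s i = μ}) := by
  ext X
  rw [mem_eigenspace_toLin'_diagonal_iff, mem_span_image_single_iff]
  rfl

end Matrix

theorem Nat.card_subtype_sum_of_iff_not {α : Type*} (p : α ⊕ α → Prop)
    (h : ∀ a, p (.inl a) ↔ ¬p (.inr a)) : Nat.card {s // p s} = Nat.card α := by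
  classical
  refine Nat.card_congr
    { toFun := fun s => Sum.elim _root_.id _root_.id s.1
      invFun := fun a =>
        if ha : p (.inl a) then ⟨.inl a, ha⟩ else ⟨.inr a, not_not.1 (mt (h a).2 ha)⟩
      left_inv := ?_
      right_inv := ?_ }
  · rintro ⟨a | a, ha⟩
    · simp [ha]
    · simp [(h a).1.mt (not_not.2 ha)]
  · intro a
    by_cases ha : p (.inl a) <;> simp [ha]

section Hyperbolic

variable {K M : Type*} [Field K] [AddCommGroup M] [Module K M] {g : M →ₗ[K] M →ₗ[K] K}

theorem apply_add_self_of_isotropic {x y : M} (hx : g x x = 0) (hy : g y y = 0)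
    (hxy : g y x = g x y) : g (x + y) (x + y) = 2 * g x y := by
  simp only [map_add, LinearMap.add_apply, hx, hy, hxy]
  ring

theorem apply_sub_self_of_isotropic {x y : M} (hx : g x x = 0) (hy : g y y = 0)
    (hxy : g y x = g x y) : g (x - y) (x - y) = -(2 * g x y) := by
  simp only [map_sub, LinearMap.sub_apply, hx, hy, hxy]
  ring

theorem isOrthoᵢ_sum_elim_add_sub {ι : Type*} {u v : ι → M} (hg : ∀ x y, g x y = g y x)
    (hu : ∀ i j, g (u i) (u j) = 0) (hv : ∀ i j, g (v i) (v j) = 0)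
    (huv : ∀ i j, i ≠ j → g (u i) (v j) = 0) : g.IsOrthoᵢ (Sum.elim (u + v) (u - v)) := by
  have hvu : ∀ i j, i ≠ j → g (v i) (u j) = 0 := fun i j hij => by rw [hg, huv j i hij.symm]
  rintro (i | i) (j | j) hij <;> obtain rfl | hij' := eq_or_ne i j <;>
    first
    | exact absurd rfl hij
    | simp [Function.onFun, hu, hv, huv i j hij', hvu i j hij']
    | simp [Function.onFun, hu, hv, hg (v i) (u i)]

variable [LinearOrder K] [IsStrictOrderedRing K] [FiniteDimensional K M]

theorem exists_basis_signature_of_hyperbolic {n : ℕ} {u v : Fin n → M}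
    (hg : ∀ x y, g x y = g y x)
    (hu : ∀ i j, g (u i) (u j) = 0) (hv : ∀ i j, g (v i) (v j) = 0)
    (huv : ∀ i j, i ≠ j → g (u i) (v j) = 0) (hd : ∀ i, g (u i) (v i) ≠ 0)
    (hM : finrank K M = n + n) :
    ∃ b : Basis (Fin (n + n)) K M, g.IsOrthoᵢ b ∧ (∀ i, g (b i) (b i) ≠ 0) ∧
      Nat.card {i // 0 < g (b i) (b i)} = n ∧ Nat.card {i // g (b i) (b i) < 0} = n := by
  set w := Sum.elim (u + v) (u - v)
  have hdiag (i : Fin n) : g (w (.inl i)) (w (.inl i)) = 2 * g (u i) (v i) ∧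
      g (w (.inr i)) (w (.inr i)) = -(2 * g (u i) (v i)) :=
    ⟨apply_add_self_of_isotropic (hu i i) (hv i i) (hg _ _),
      apply_sub_self_of_isotropic (hu i i) (hv i i) (hg _ _)⟩
  have hw : ∀ s, g (w s) (w s) ≠ 0 := by
    rintro (i | i) <;> simp [(hdiag i).1, (hdiag i).2, hd i]
  have horth := isOrthoᵢ_sum_elim_add_sub hg hu hv huv
  let b := (basisOfLinearIndependentOfCardEqFinrank' w
    (LinearMap.linearIndependent_of_isOrthoᵢ horth hw) (by simp [hM])).reindex finSumFinEquiv
  have hb (i : Fin (n + n)) : b i = w (finSumFinEquiv.symm i) := by simp [b]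
  have hcard (p : K → Prop)
      (hp : ∀ i, p (g (w (.inl i)) (w (.inl i))) ↔ ¬p (g (w (.inr i)) (w (.inr i)))) :
      Nat.card {i // p (g (b i) (b i))} = n := by
    calc Nat.card {i // p (g (b i) (b i))}
        = Nat.card {s // p (g (w s) (w s))} :=
          Nat.card_congr (finSumFinEquiv.symm.subtypeEquiv fun i => by rw [hb])
      _ = n := by rw [Nat.card_subtype_sum_of_iff_not _ hp, Nat.card_fin]
  refine ⟨b, fun i j hij => ?_, fun i => ?_, hcard (0 < ·) fun i => ?_,
    hcard (· < 0) fun i => ?_⟩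
  · show g (b i) (b j) = 0
    rw [hb, hb]
    exact horth (finSumFinEquiv.symm.injective.ne hij)
  · simpa [hb] using hw _
  · rw [(hdiag i).1, (hdiag i).2]
    rcases (hd i).lt_or_gt with h | h <;> constructor <;> intros <;> linarith
  · rw [(hdiag i).1, (hdiag i).2]
    rcases (hd i).lt_or_gt with h | h <;> constructor <;> intros <;> linarith

end Hyperbolic

-- Coordinates are 0-indexed: `X 0` is the coefficient of the paper's e₁.
def omega4 (a13 a14 a23 a24 a25 a46 : ℝ) : V →ₗ[ℝ] V →ₗ[ℝ] ℝ :=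
  LinearMap.mk₂ ℝ
    (fun X Y => a13 * (X 0 * Y 2 - X 2 * Y 0) + a14 * (X 0 * Y 3 - X 3 * Y 0) +
      a23 * (X 1 * Y 2 - X 2 * Y 1) + a24 * (X 1 * Y 3 - X 3 * Y 1) +
      a25 * (X 1 * Y 4 - X 4 * Y 1) + a46 * (X 3 * Y 5 - X 5 * Y 3))
    (fun _ _ _ => by simp only [Pi.add_apply]; ring)
    (fun _ _ _ => by simp only [Pi.smul_apply, smul_eq_mul]; ring)
    (fun _ _ _ => by simp only [Pi.add_apply]; ring)
    (fun _ _ _ => by simp only [Pi.smul_apply, smul_eq_mul]; ring)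

def P4 : Module.End ℝ V := Matrix.toLin' (Matrix.diagonal ![-1, -1, 1, 1, 1, -1])

section

variable {a13 a14 a23 a24 a25 a46 : ℝ}

theorem eq_omega4 {ω : V →ₗ[ℝ] V →ₗ[ℝ] ℝ} (hωalt : ∀ X, ω X X = 0)
    (hω1 : ω (e 0) (e 2) = a13) (hω2 : ω (e 0) (e 3) = a14) (hω3 : ω (e 1) (e 2) = a23)
    (hω4 : ω (e 1) (e 3) = a24) (hω5 : ω (e 1) (e 4) = a25) (hω6 : ω (e 3) (e 5) = a46)
    (hωz : ∀ i j : Fin 6, i < j →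
      (i, j) ∉ ({(0,2),(0,3),(1,2),(1,3),(1,4),(3,5)} : Set (Fin 6 × Fin 6)) → ω (e i) (e j) = 0) :
    ω = omega4 a13 a14 a23 a24 a25 a46 := by
  refine ext_basis_of_isAlt (Pi.basisFun ℝ (Fin 6)) hωalt (fun X => by simp [omega4]; ring)
    fun i j hij => ?_
  simp only [Pi.basisFun_apply]
  change ω (e i) (e j) = omega4 a13 a14 a23 a24 a25 a46 (e i) (e j)
  fin_cases i <;> fin_cases j <;>
    simp only [Fin.zero_eta, Fin.mk_one, Fin.reduceFinMk] at hij ⊢ <;> first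
    | exact absurd hij (by decide)
    | (simp only [hω1, hω2, hω3, hω4, hω5, hω6]; simp [omega4, e])
    | (rw [hωz _ _ hij (by simp)]; simp [omega4, e])

theorem eq_P4 {P : Module.End ℝ V} (hP1 : P (e 0) = -e 0) (hP2 : P (e 1) = -e 1)
    (hP3 : P (e 2) = e 2) (hP4 : P (e 3) = e 3) (hP5 : P (e 4) = e 4) (hP6 : P (e 5) = -e 5) :
    P = P4 :=
  Matrix.toLin'_diagonal_eq fun i => by
    simp only [e] at hP1 hP2 hP3 hP4 hP5 hP6
    fin_cases i <;> simp [hP1, hP2, hP3, hP4, hP5, hP6]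

theorem P4_apply_apply (X : V) : P4 (P4 X) = X := by
  ext i
  fin_cases i <;> simp [P4, Matrix.mulVec_diagonal]

theorem omega4_P4 (X Y : V) :
    omega4 a13 a14 a23 a24 a25 a46 (P4 X) (P4 Y) = -omega4 a13 a14 a23 a24 a25 a46 X Y := by
  simp [omega4, P4, Matrix.mulVec_diagonal]
  ring

theorem eigenspace_P4_one : End.eigenspace P4 1 = Submodule.span ℝ {e 2, e 3, e 4} := by
  have hS : {i | ![(-1 : ℝ), -1, 1, 1, 1, -1] i = 1} = {2, 3, 4} := by
    ext i
    fin_cases i <;> norm_num [Fin.ext_iff]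
  rw [P4, Matrix.eigenspace_toLin'_diagonal, hS]
  simp [Set.image_insert_eq, e]

theorem eigenspace_P4_neg_one : End.eigenspace P4 (-1) = Submodule.span ℝ {e 0, e 1, e 5} := by
  have hS : {i | ![(-1 : ℝ), -1, 1, 1, 1, -1] i = -1} = {0, 1, 5} := by
    ext i
    fin_cases i <;> norm_num [Fin.ext_iff]
  rw [P4, Matrix.eigenspace_toLin'_diagonal, hS]
  simp [Set.image_insert_eq, e]

def metric4 (a13 a14 a23 a24 a25 a46 : ℝ) : V →ₗ[ℝ] V →ₗ[ℝ] ℝ :=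
  (omega4 a13 a14 a23 a24 a25 a46).compl₂ P4

theorem exists_hyperbolic_metric4 (ha13 : a13 ≠ 0) (ha25 : a25 ≠ 0) (ha46 : a46 ≠ 0) :
    ∃ u v : Fin 3 → V, (∀ i j, metric4 a13 a14 a23 a24 a25 a46 (u i) (u j) = 0) ∧
      (∀ i j, metric4 a13 a14 a23 a24 a25 a46 (v i) (v j) = 0) ∧
      (∀ i j, i ≠ j → metric4 a13 a14 a23 a24 a25 a46 (u i) (v j) = 0) ∧
      ∀ i, metric4 a13 a14 a23 a24 a25 a46 (u i) (v i) ≠ 0 := by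
  -- Inside the (-1)- and (+1)-eigenspaces, which are isotropic for the metric, the corrections
  -- to e 1 and e 3 clear the pairings ω(e 1, e 2), ω(e 0, e 3) and ω(e 1, e 3).
  refine ⟨![e 0, e 1 - (a23 / a13) • e 0, e 5],
    ![e 2, e 4, e 3 - (a14 / a13) • e 2 - ((a24 - a14 * a23 / a13) / a25) • e 4],
    fun i j => ?_, fun i j => ?_, fun i j hij => ?_, fun i => ?_⟩
  · fin_cases i <;> fin_cases j <;> simp [metric4, omega4, P4, Matrix.mulVec_diagonal, e]
  · fin_cases i <;> fin_cases j <;> simp [metric4, omega4, P4, Matrix.mulVec_diagonal, e]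
  · fin_cases i <;> fin_cases j <;> first
    | exact absurd rfl hij
    | simp [metric4, omega4, P4, Matrix.mulVec_diagonal, e] <;> field_simp <;> ring
  · fin_cases i <;> simp [metric4, omega4, P4, Matrix.mulVec_diagonal, e, ha13, ha25, ha46]

end

theorem stmt_16_general
    (a13 a14 a23 a24 a25 a46 : ℝ)
    (ha13 : a13 ≠ 0) (ha25 : a25 ≠ 0) (ha46 : a46 ≠ 0)
    (B : V →ₗ[ℝ] V →ₗ[ℝ] V)
    (hB1 : B (e 0) (e 1) = e 3)
    (hB4 : B (e 2) (e 4) = e 5)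
    (ω : V →ₗ[ℝ] V →ₗ[ℝ] ℝ)
    (hωalt : ∀ X, ω X X = 0)
    (hω1 : ω (e 0) (e 2) = a13)
    (hω2 : ω (e 0) (e 3) = a14)
    (hω3 : ω (e 1) (e 2) = a23)
    (hω4 : ω (e 1) (e 3) = a24)
    (hω5 : ω (e 1) (e 4) = a25)
    (hω6 : ω (e 3) (e 5) = a46)
    (hωz : ∀ i j : Fin 6, i < j → (i, j) ∉ ({(0,2),(0,3),(1,2),(1,3),(1,4),(3,5)} : Set (Fin 6 × Fin 6)) → ω (e i) (e j) = 0)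
    (P : Module.End ℝ V)
    (hP1 : P (e 0) = -e 0)
    (hP2 : P (e 1) = -e 1)
    (hP3 : P (e 2) = e 2)
    (hP4 : P (e 3) = e 3)
    (hP5 : P (e 4) = e 4)
    (hP6 : P (e 5) = -e 5)
    (g : V →ₗ[ℝ] V →ₗ[ℝ] ℝ)
    (hg : ∀ X Y, g X Y = ω X (P Y))
    (Ep Em : Submodule ℝ V)
    (hEp : Ep = Submodule.span ℝ ({(e 2 : V), (e 3 : V), (e 4 : V)} : Set V))
    (hEm : Em = Submodule.span ℝ ({(e 0 : V), (e 1 : V), (e 5 : V)} : Set V)) :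
    (∀ X : V, (∀ Y, ω X Y = 0) → X = 0) ∧
    P ∘ₗ P = LinearMap.id ∧
    (∀ X Y, ω (P X) (P Y) = - ω X Y) ∧
    Module.End.eigenspace P 1 = Ep ∧
    Module.End.eigenspace P (-1) = Em ∧
    ¬ (∀ X ∈ Ep, ∀ Y ∈ Ep, B X Y ∈ Ep) ∧
    ¬ (∀ X ∈ Em, ∀ Y ∈ Em, B X Y ∈ Em) ∧
    (∀ X Y, g X Y = g Y X) ∧
    (∀ X : V, (∀ Y, g X Y = 0) → X = 0) ∧
    (∃ b : Basis (Fin 6) ℝ V,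
      (∀ i j, i ≠ j → g (b i) (b j) = 0) ∧
      Nat.card {i : Fin 6 // 0 < g (b i) (b i)} = 3 ∧
      Nat.card {i : Fin 6 // g (b i) (b i) < 0} = 3) := by
  obtain rfl := eq_omega4 hωalt hω1 hω2 hω3 hω4 hω5 hω6 hωz
  obtain rfl := eq_P4 hP1 hP2 hP3 hP4 hP5 hP6
  obtain rfl : g = metric4 a13 a14 a23 a24 a25 a46 := LinearMap.ext₂ hg
  subst hEp hEm
  have hsymm : ∀ X Y, metric4 a13 a14 a23 a24 a25 a46 X Y = metric4 a13 a14 a23 a24 a25 a46 Y X :=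
    LinearMap.IsAlt.apply_apply_comm hωalt P4_apply_apply omega4_P4
  obtain ⟨u, v, hu, hv, huv, hd⟩ := exists_hyperbolic_metric4 ha13 ha25 ha46
  obtain ⟨b, horth, hdiag, hpos, hneg⟩ :=
    exists_basis_signature_of_hyperbolic (n := 3) hsymm hu hv huv hd (by simp)
  have hnd := horth.separatingLeft_of_not_isOrtho_basis_self b hdiag
  refine ⟨fun X hX => hnd X fun Y => hX _, LinearMap.ext P4_apply_apply, omega4_P4,
    eigenspace_P4_one, eigenspace_P4_neg_one, fun h => ?_, fun h => ?_, hsymm, hnd,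
    b, fun i j hij => horth hij, hpos, hneg⟩
  · have h5 := hB4 ▸ h (e 2) (Submodule.subset_span (by simp)) (e 4)
      (Submodule.subset_span (by simp))
    rw [← eigenspace_P4_one, e, P4, Matrix.single_mem_eigenspace_toLin'_diagonal_iff] at h5
    simp at h5
    norm_num at h5
  · have h3 := hB1 ▸ h (e 0) (Submodule.subset_span (by simp)) (e 1)
      (Submodule.subset_span (by simp))
    rw [← eigenspace_P4_neg_one, e, P4, Matrix.single_mem_eigenspace_toLin'_diagonal_iff] at h3
    simp at h3
    norm_num at h3

theorem stmt_16
    (a13 a14 a23 a24 a25 a46 : ℝ)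
    (ha13 : a13 ≠ 0) (ha25 : a25 ≠ 0) (ha46 : a46 ≠ 0)
    (B : V →ₗ[ℝ] V →ₗ[ℝ] V)
    (hBanti : ∀ X Y, B X Y = - B Y X)
    (hB1 : B (e 0) (e 1) = e 3)
    (hB2 : B (e 1) (e 2) = e 4)
    (hB3 : B (e 0) (e 3) = e 5)
    (hB4 : B (e 2) (e 4) = e 5)
    (hBz : ∀ i j : Fin 6, i < j → (i, j) ∉ ({(0,1),(1,2),(0,3),(2,4)} : Set (Fin 6 × Fin 6)) → B (e i) (e j) = 0)
    (ω : V →ₗ[ℝ] V →ₗ[ℝ] ℝ)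
    (hωalt : ∀ X, ω X X = 0)
    (hω1 : ω (e 0) (e 2) = a13)
    (hω2 : ω (e 0) (e 3) = a14)
    (hω3 : ω (e 1) (e 2) = a23)
    (hω4 : ω (e 1) (e 3) = a24)
    (hω5 : ω (e 1) (e 4) = a25)
    (hω6 : ω (e 3) (e 5) = a46)
    (hωz : ∀ i j : Fin 6, i < j → (i, j) ∉ ({(0,2),(0,3),(1,2),(1,3),(1,4),(3,5)} : Set (Fin 6 × Fin 6)) → ω (e i) (e j) = 0)
    (P : Module.End ℝ V)
    (hP1 : P (e 0) = -e 0)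
    (hP2 : P (e 1) = -e 1)
    (hP3 : P (e 2) = e 2)
    (hP4 : P (e 3) = e 3)
    (hP5 : P (e 4) = e 4)
    (hP6 : P (e 5) = -e 5)
    (g : V →ₗ[ℝ] V →ₗ[ℝ] ℝ)
    (hg : ∀ X Y, g X Y = ω X (P Y))
    (Ep Em : Submodule ℝ V)
    (hEp : Ep = Submodule.span ℝ ({(e 2 : V), (e 3 : V), (e 4 : V)} : Set V))
    (hEm : Em = Submodule.span ℝ ({(e 0 : V), (e 1 : V), (e 5 : V)} : Set V)) :
    (∀ X : V, (∀ Y, ω X Y = 0) → X = 0) ∧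
    P ∘ₗ P = LinearMap.id ∧
    (∀ X Y, ω (P X) (P Y) = - ω X Y) ∧
    Module.End.eigenspace P 1 = Ep ∧
    Module.End.eigenspace P (-1) = Em ∧
    ¬ (∀ X ∈ Ep, ∀ Y ∈ Ep, B X Y ∈ Ep) ∧
    ¬ (∀ X ∈ Em, ∀ Y ∈ Em, B X Y ∈ Em) ∧
    (∀ X Y, g X Y = g Y X) ∧
    (∀ X : V, (∀ Y, g X Y = 0) → X = 0) ∧
    (∃ b : Basis (Fin 6) ℝ V,
      (∀ i j, i ≠ j → g (b i) (b j) = 0) ∧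
      Nat.card {i : Fin 6 // 0 < g (b i) (b i)} = 3 ∧
      Nat.card {i : Fin 6 // g (b i) (b i) < 0} = 3) :=
  stmt_16_general a13 a14 a23 a24 a25 a46 ha13 ha25 ha46 B hB1 hB4 ω hωalt hω1 hω2 hω3 hω4 hω5 hω6
    hωz P hP1 hP2 hP3 hP4 hP5 hP6 g hg Ep Em hEp hEm
end
end

section
/- The 2-form ω on 𝔤₅ is nondegenerate; the operator P satisfies P∘P = Id and ω(PX,PY) = −ω(X,Y) for all X,Y; the (+1)-eigenspace of P is span{e₁,e₂,e₆} and the (−1)-eigenspace is span{e₃,e₄,e₅}; neither eigenspace is closed under the Lie bracket of 𝔤₅; and the bilinear form g(X,Y) = ω(X,PY) is symmetric, nondegenerate, and of signature (3,3) (some basis diagonalizes g with exactly three positive and three negative diagonal entries). -/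
noncomputable section

open LinearMap Module

theorem v60 {α : Type*} (a0 a1 a2 a3 a4 a5 : α) : ![a0,a1,a2,a3,a4,a5] 0 = a0 := rfl
theorem v61 {α : Type*} (a0 a1 a2 a3 a4 a5 : α) : ![a0,a1,a2,a3,a4,a5] 1 = a1 := rfl
theorem v62 {α : Type*} (a0 a1 a2 a3 a4 a5 : α) : ![a0,a1,a2,a3,a4,a5] 2 = a2 := rfl
theorem v63 {α : Type*} (a0 a1 a2 a3 a4 a5 : α) : ![a0,a1,a2,a3,a4,a5] 3 = a3 := rfl
theorem v64 {α : Type*} (a0 a1 a2 a3 a4 a5 : α) : ![a0,a1,a2,a3,a4,a5] 4 = a4 := rfl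
theorem v65 {α : Type*} (a0 a1 a2 a3 a4 a5 : α) : ![a0,a1,a2,a3,a4,a5] 5 = a5 := rfl

set_option maxHeartbeats 2000000

theorem stmt_19
    (a13 a14 a15 a23 a24 a25 a56 : ℝ)
    (ha56 : a56 ≠ 0) (hdet : a13*a24 - a14*a23 ≠ 0)
    (B : V →ₗ[ℝ] V →ₗ[ℝ] V)
    (hBanti : ∀ X Y, B X Y = - B Y X)
    (hB1 : B (e 0) (e 1) = e 4)
    (hB2 : B (e 0) (e 4) = e 5)
    (hB3 : B (e 2) (e 3) = e 5)
    (hBz : ∀ i j : Fin 6, i < j → (i, j) ∉ ({(0,1),(0,4),(2,3)} : Set (Fin 6 × Fin 6)) → B (e i) (e j) = 0)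
    (ω : V →ₗ[ℝ] V →ₗ[ℝ] ℝ)
    (hωalt : ∀ X, ω X X = 0)
    (hω1 : ω (e 0) (e 2) = a13)
    (hω2 : ω (e 0) (e 3) = a14)
    (hω3 : ω (e 0) (e 4) = a15)
    (hω4 : ω (e 1) (e 2) = a23)
    (hω5 : ω (e 1) (e 3) = a24)
    (hω6 : ω (e 1) (e 4) = a25)
    (hω7 : ω (e 4) (e 5) = a56)
    (hωz : ∀ i j : Fin 6, i < j → (i, j) ∉ ({(0,2),(0,3),(0,4),(1,2),(1,3),(1,4),(4,5)} : Set (Fin 6 × Fin 6)) → ω (e i) (e j) = 0)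
    (P : Module.End ℝ V)
    (hP1 : P (e 0) = e 0)
    (hP2 : P (e 1) = e 1)
    (hP3 : P (e 2) = -e 2)
    (hP4 : P (e 3) = -e 3)
    (hP5 : P (e 4) = -e 4)
    (hP6 : P (e 5) = e 5)
    (g : V →ₗ[ℝ] V →ₗ[ℝ] ℝ)
    (hg : ∀ X Y, g X Y = ω X (P Y))
    (Ep Em : Submodule ℝ V)
    (hEp : Ep = Submodule.span ℝ ({(e 0 : V), (e 1 : V), (e 5 : V)} : Set V))
    (hEm : Em = Submodule.span ℝ ({(e 2 : V), (e 3 : V), (e 4 : V)} : Set V)) :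
    (∀ X : V, (∀ Y, ω X Y = 0) → X = 0) ∧
    P ∘ₗ P = LinearMap.id ∧
    (∀ X Y, ω (P X) (P Y) = - ω X Y) ∧
    Module.End.eigenspace P 1 = Ep ∧
    Module.End.eigenspace P (-1) = Em ∧
    ¬ (∀ X ∈ Ep, ∀ Y ∈ Ep, B X Y ∈ Ep) ∧
    ¬ (∀ X ∈ Em, ∀ Y ∈ Em, B X Y ∈ Em) ∧
    (∀ X Y, g X Y = g Y X) ∧
    (∀ X : V, (∀ Y, g X Y = 0) → X = 0) ∧
    (∃ b : Basis (Fin 6) ℝ V,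
      (∀ i j, i ≠ j → g (b i) (b j) = 0) ∧
      Nat.card {i : Fin 6 // 0 < g (b i) (b i)} = 3 ∧
      Nat.card {i : Fin 6 // g (b i) (b i) < 0} = 3) := by
  have anti : ∀ X Y, ω X Y = - ω Y X := by
    intro X Y
    have h := hωalt (X + Y)
    simp only [map_add, LinearMap.add_apply, hωalt X, hωalt Y] at h
    linarith
  have expand : ∀ X : V, X = X 0 • e 0 + X 1 • e 1 + X 2 • e 2 + X 3 • e 3 + X 4 • e 4 + X 5 • e 5 := by
    intro X; funext i; fin_cases i <;> simp [e, Pi.single, Function.update]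
  have hw00 : ω (e 0) (e 0) = 0 := hωalt _
  have hw01 : ω (e 0) (e 1) = 0 := hωz 0 1 (by decide) (by simp)
  have hw02 : ω (e 0) (e 2) = a13 := hω1
  have hw03 : ω (e 0) (e 3) = a14 := hω2
  have hw04 : ω (e 0) (e 4) = a15 := hω3
  have hw05 : ω (e 0) (e 5) = 0 := hωz 0 5 (by decide) (by simp)
  have hw10 : ω (e 1) (e 0) = 0 := by rw [anti, hωz 0 1 (by decide) (by simp), neg_zero]
  have hw11 : ω (e 1) (e 1) = 0 := hωalt _
  have hw12 : ω (e 1) (e 2) = a23 := hω4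
  have hw13 : ω (e 1) (e 3) = a24 := hω5
  have hw14 : ω (e 1) (e 4) = a25 := hω6
  have hw15 : ω (e 1) (e 5) = 0 := hωz 1 5 (by decide) (by simp)
  have hw20 : ω (e 2) (e 0) = -a13 := by rw [anti, hω1]
  have hw21 : ω (e 2) (e 1) = -a23 := by rw [anti, hω4]
  have hw22 : ω (e 2) (e 2) = 0 := hωalt _
  have hw23 : ω (e 2) (e 3) = 0 := hωz 2 3 (by decide) (by simp)
  have hw24 : ω (e 2) (e 4) = 0 := hωz 2 4 (by decide) (by simp)
  have hw25 : ω (e 2) (e 5) = 0 := hωz 2 5 (by decide) (by simp)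
  have hw30 : ω (e 3) (e 0) = -a14 := by rw [anti, hω2]
  have hw31 : ω (e 3) (e 1) = -a24 := by rw [anti, hω5]
  have hw32 : ω (e 3) (e 2) = 0 := by rw [anti, hωz 2 3 (by decide) (by simp), neg_zero]
  have hw33 : ω (e 3) (e 3) = 0 := hωalt _
  have hw34 : ω (e 3) (e 4) = 0 := hωz 3 4 (by decide) (by simp)
  have hw35 : ω (e 3) (e 5) = 0 := hωz 3 5 (by decide) (by simp)
  have hw40 : ω (e 4) (e 0) = -a15 := by rw [anti, hω3]
  have hw41 : ω (e 4) (e 1) = -a25 := by rw [anti, hω6]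
  have hw42 : ω (e 4) (e 2) = 0 := by rw [anti, hωz 2 4 (by decide) (by simp), neg_zero]
  have hw43 : ω (e 4) (e 3) = 0 := by rw [anti, hωz 3 4 (by decide) (by simp), neg_zero]
  have hw44 : ω (e 4) (e 4) = 0 := hωalt _
  have hw45 : ω (e 4) (e 5) = a56 := hω7
  have hw50 : ω (e 5) (e 0) = 0 := by rw [anti, hωz 0 5 (by decide) (by simp), neg_zero]
  have hw51 : ω (e 5) (e 1) = 0 := by rw [anti, hωz 1 5 (by decide) (by simp), neg_zero]
  have hw52 : ω (e 5) (e 2) = 0 := by rw [anti, hωz 2 5 (by decide) (by simp), neg_zero]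
  have hw53 : ω (e 5) (e 3) = 0 := by rw [anti, hωz 3 5 (by decide) (by simp), neg_zero]
  have hw54 : ω (e 5) (e 4) = -a56 := by rw [anti, hω7]
  have hw55 : ω (e 5) (e 5) = 0 := hωalt _

  have ωexp : ∀ X Y : V, ω X Y = a13*(X 0*Y 2 - X 2*Y 0) + a14*(X 0*Y 3 - X 3*Y 0) + a15*(X 0*Y 4 - X 4*Y 0)
      + a23*(X 1*Y 2 - X 2*Y 1) + a24*(X 1*Y 3 - X 3*Y 1) + a25*(X 1*Y 4 - X 4*Y 1)
      + a56*(X 4*Y 5 - X 5*Y 4) := by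
    intro X Y
    conv_lhs => rw [expand X, expand Y]
    simp only [map_add, map_smul, LinearMap.add_apply, LinearMap.smul_apply, smul_eq_mul,
      hw00, hw01, hw02, hw03, hw04, hw05, hw10, hw11, hw12, hw13, hw14, hw15,
      hw20, hw21, hw22, hw23, hw24, hw25, hw30, hw31, hw32, hw33, hw34, hw35,
      hw40, hw41, hw42, hw43, hw44, hw45, hw50, hw51, hw52, hw53, hw54, hw55]
    ring
  have hPapp : ∀ Y : V, P Y = ![Y 0, Y 1, -(Y 2), -(Y 3), -(Y 4), Y 5] := by
    intro Y
    conv_lhs => rw [expand Y]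
    simp only [map_add, map_smul, hP1, hP2, hP3, hP4, hP5, hP6]
    funext i; fin_cases i <;>
      simp [e, Pi.single_apply, v60, v61, v62, v63, v64, v65] <;> ring
  have ωnd : ∀ X : V, (∀ Y, ω X Y = 0) → X = 0 := by
    intro X hX
    have q0 := hX (e 0); have q1 := hX (e 1); have q2 := hX (e 2)
    have q3 := hX (e 3); have q4 := hX (e 4); have q5 := hX (e 5)
    rw [ωexp] at q0 q1 q2 q3 q4 q5
    simp [-mul_eq_zero, e, Pi.single_apply] at q0 q1 q2 q3 q4 q5
    have hX4 : X 4 = 0 := by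
      have h : a56 * X 4 = 0 := by linear_combination q5
      exact (mul_eq_zero.mp h).resolve_left ha56
    have hX0 : X 0 = 0 := by
      have h : (a13*a24 - a14*a23) * X 0 = 0 := by linear_combination a24*q2 - a23*q3
      exact (mul_eq_zero.mp h).resolve_left hdet
    have hX1 : X 1 = 0 := by
      have h : (a13*a24 - a14*a23) * X 1 = 0 := by linear_combination -a14*q2 + a13*q3
      exact (mul_eq_zero.mp h).resolve_left hdet
    have hX2 : X 2 = 0 := by
      have h : (a13*a24 - a14*a23) * X 2 = 0 := by
        linear_combination -a24*q0 + a14*q1 + (a14*a25 - a24*a15)*hX4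
      exact (mul_eq_zero.mp h).resolve_left hdet
    have hX3 : X 3 = 0 := by
      have h : (a13*a24 - a14*a23) * X 3 = 0 := by
        linear_combination a23*q0 - a13*q1 + (a15*a23 - a13*a25)*hX4
      exact (mul_eq_zero.mp h).resolve_left hdet
    have hX5 : X 5 = 0 := by
      have h : a56 * X 5 = 0 := by linear_combination -q4 + a15*hX0 + a25*hX1
      exact (mul_eq_zero.mp h).resolve_left ha56
    funext i; fin_cases i
    · exact hX0
    · exact hX1
    · exact hX2
    · exact hX3
    · exact hX4
    · exact hX5
  have hPP : P ∘ₗ P = LinearMap.id := by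
    apply LinearMap.ext; intro Y
    simp only [LinearMap.comp_apply, LinearMap.id_apply]
    rw [hPapp Y, hPapp]
    funext i; fin_cases i <;>
      simp [v60, v61, v62, v63, v64, v65]
  have hPPa : ∀ Y : V, P (P Y) = Y := by
    intro Y
    have := DFunLike.congr_fun hPP Y
    simpa using this
  have hωP : ∀ X Y, ω (P X) (P Y) = - ω X Y := by
    intro X Y
    rw [ωexp (P X) (P Y), ωexp X Y, hPapp X, hPapp Y]
    simp only [v60, v61, v62, v63, v64, v65]
    ring
  have heigp : Module.End.eigenspace P 1 = Ep := by
    rw [hEp]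
    apply le_antisymm
    · intro X hX
      rw [Module.End.mem_eigenspace_iff, one_smul, hPapp X] at hX
      have h2 : X 2 = 0 := by have := congrFun hX 2; norm_num [v60, v61, v62, v63, v64, v65] at this; linarith
      have h3 : X 3 = 0 := by have := congrFun hX 3; norm_num [v60, v61, v62, v63, v64, v65] at this; linarith
      have h4 : X 4 = 0 := by have := congrFun hX 4; norm_num [v60, v61, v62, v63, v64, v65] at this; linarith
      have hXeq : X = X 0 • e 0 + X 1 • e 1 + X 5 • e 5 := by
        funext i; fin_cases i <;> simp [e, Pi.single, Function.update, h2, h3, h4]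
      rw [hXeq]
      refine add_mem (add_mem ?_ ?_) ?_ <;>
        exact Submodule.smul_mem _ _ (Submodule.subset_span (by simp))
    · rw [Submodule.span_le]
      intro x hx
      simp only [Set.mem_insert_iff, Set.mem_singleton_iff] at hx
      rcases hx with rfl | rfl | rfl <;>
        · rw [SetLike.mem_coe, Module.End.mem_eigenspace_iff, one_smul]
          first | exact hP1 | exact hP2 | exact hP6
  have heigm : Module.End.eigenspace P (-1) = Em := by
    rw [hEm]
    apply le_antisymm
    · intro X hX
      rw [Module.End.mem_eigenspace_iff, hPapp X] at hX
      have h0 : X 0 = 0 := by have := congrFun hX 0; norm_num [Pi.smul_apply, v60, v61, v62, v63, v64, v65] at this; linarith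
      have h1 : X 1 = 0 := by have := congrFun hX 1; norm_num [Pi.smul_apply, v60, v61, v62, v63, v64, v65] at this; linarith
      have h5 : X 5 = 0 := by have := congrFun hX 5; norm_num [Pi.smul_apply, v60, v61, v62, v63, v64, v65] at this; linarith
      have hXeq : X = X 2 • e 2 + X 3 • e 3 + X 4 • e 4 := by
        funext i; fin_cases i <;> simp [e, Pi.single, Function.update, h0, h1, h5]
      rw [hXeq]
      refine add_mem (add_mem ?_ ?_) ?_ <;>
        exact Submodule.smul_mem _ _ (Submodule.subset_span (by simp))
    · rw [Submodule.span_le]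
      intro x hx
      simp only [Set.mem_insert_iff, Set.mem_singleton_iff] at hx
      rcases hx with rfl | rfl | rfl <;>
        · rw [SetLike.mem_coe, Module.End.mem_eigenspace_iff, neg_one_smul]
          first | exact hP3 | exact hP4 | exact hP5
  have notin4 : (e 4 : V) ∉ Submodule.span ℝ ({(e 0 : V), (e 1 : V), (e 5 : V)} : Set V) := by
    intro hmem
    have hle : Submodule.span ℝ ({(e 0 : V), (e 1 : V), (e 5 : V)} : Set V) ≤
        LinearMap.ker (LinearMap.proj (R := ℝ) (φ := fun _ : Fin 6 => ℝ) 4) := by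
      rw [Submodule.span_le]
      intro x hx
      simp only [Set.mem_insert_iff, Set.mem_singleton_iff] at hx
      rcases hx with rfl | rfl | rfl <;> simp [LinearMap.mem_ker, e, Pi.single, Function.update]
    have := hle hmem
    simp [LinearMap.mem_ker, e, Pi.single, Function.update] at this
  have notin5 : (e 5 : V) ∉ Submodule.span ℝ ({(e 2 : V), (e 3 : V), (e 4 : V)} : Set V) := by
    intro hmem
    have hle : Submodule.span ℝ ({(e 2 : V), (e 3 : V), (e 4 : V)} : Set V) ≤
        LinearMap.ker (LinearMap.proj (R := ℝ) (φ := fun _ : Fin 6 => ℝ) 5) := by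
      rw [Submodule.span_le]
      intro x hx
      simp only [Set.mem_insert_iff, Set.mem_singleton_iff] at hx
      rcases hx with rfl | rfl | rfl <;> simp [LinearMap.mem_ker, e, Pi.single, Function.update]
    have := hle hmem
    simp [LinearMap.mem_ker, e, Pi.single, Function.update] at this
  have hnotp : ¬ (∀ X ∈ Ep, ∀ Y ∈ Ep, B X Y ∈ Ep) := by
    rw [hEp]
    intro h
    have h0 : (e 0 : V) ∈ Submodule.span ℝ ({(e 0 : V), (e 1 : V), (e 5 : V)} : Set V) :=
      Submodule.subset_span (by simp)
    have h1 : (e 1 : V) ∈ Submodule.span ℝ ({(e 0 : V), (e 1 : V), (e 5 : V)} : Set V) :=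
      Submodule.subset_span (by simp)
    have := h (e 0) h0 (e 1) h1
    rw [hB1] at this
    exact notin4 this
  have hnotm : ¬ (∀ X ∈ Em, ∀ Y ∈ Em, B X Y ∈ Em) := by
    rw [hEm]
    intro h
    have h2 : (e 2 : V) ∈ Submodule.span ℝ ({(e 2 : V), (e 3 : V), (e 4 : V)} : Set V) :=
      Submodule.subset_span (by simp)
    have h3 : (e 3 : V) ∈ Submodule.span ℝ ({(e 2 : V), (e 3 : V), (e 4 : V)} : Set V) :=
      Submodule.subset_span (by simp)
    have := h (e 2) h2 (e 3) h3
    rw [hB3] at this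
    exact notin5 this
  have gexp : ∀ X Y : V, g X Y = -(a13*(X 0*Y 2 + X 2*Y 0)) - a14*(X 0*Y 3 + X 3*Y 0)
      - a15*(X 0*Y 4 + X 4*Y 0) - a23*(X 1*Y 2 + X 2*Y 1) - a24*(X 1*Y 3 + X 3*Y 1)
      - a25*(X 1*Y 4 + X 4*Y 1) + a56*(X 4*Y 5 + X 5*Y 4) := by
    intro X Y
    rw [hg, ωexp X (P Y), hPapp Y]
    simp only [v60, v61, v62, v63, v64, v65]
    ring
  have gsymm : ∀ X Y, g X Y = g Y X := by
    intro X Y; rw [gexp X Y, gexp Y X]; ring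
  have gnd : ∀ X : V, (∀ Y, g X Y = 0) → X = 0 := by
    intro X hX
    apply ωnd X
    intro Y
    have h := hX (P Y)
    rw [hg, hPPa] at h
    exact h
  refine ⟨ωnd, hPP, hωP, heigp, heigm, hnotp, hnotm, gsymm, gnd, ?_⟩
  set D : ℝ := a13*a24 - a14*a23 with hD
  set bv : Fin 6 → V :=
    ![![1, 0, -a24/D, a23/D, 0, a15/a56],
      ![1, 0, a24/D, -a23/D, 0, a15/a56],
      ![0, 1, a14/D, -a13/D, 0, a25/a56],
      ![0, 1, -a14/D, a13/D, 0, a25/a56],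
      ![0, 0, 0, 0, 1, 1],
      ![0, 0, 0, 0, 1, -1]] with hbv
  have hgram : ∀ i j, g (bv i) (bv j) = ![(2:ℝ), -2, 2, -2, 2*a56, -2*a56] i * (if i = j then 1 else 0) := by
    intro i j
    have hD0 : D ≠ 0 := hdet
    fin_cases i <;> fin_cases j <;>
      · rw [gexp]
        norm_num [hbv, v60, v61, v62, v63, v64, v65, Fin.ext_iff]
        try field_simp
        try ring
  have hvne : ∀ j : Fin 6, (![(2:ℝ), -2, 2, -2, 2*a56, -2*a56] : Fin 6 → ℝ) j ≠ 0 := by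
    intro j
    fin_cases j
    · show (2:ℝ) ≠ 0; norm_num
    · show (-2:ℝ) ≠ 0; norm_num
    · show (2:ℝ) ≠ 0; norm_num
    · show (-2:ℝ) ≠ 0; norm_num
    · show (2*a56:ℝ) ≠ 0; norm_num [mul_eq_zero, ha56]
    · show ((-2)*a56:ℝ) ≠ 0; norm_num [mul_eq_zero, ha56]
  have hli : LinearIndependent ℝ bv := by
    rw [Fintype.linearIndependent_iff]
    intro c hc j
    have h := congrArg (fun v => g v (bv j)) hc
    simp only [map_sum, LinearMap.sum_apply, map_smul, LinearMap.smul_apply, smul_eq_mul,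
      map_zero, LinearMap.zero_apply] at h
    simp only [hgram, mul_ite, mul_one, mul_zero] at h
    rw [Finset.sum_ite_eq' Finset.univ j (fun i => c i * ![(2:ℝ), -2, 2, -2, 2*a56, -2*a56] i)] at h
    simp only [Finset.mem_univ, if_true] at h
    exact (mul_eq_zero.mp h).resolve_right (hvne j)
  have hcard : Fintype.card (Fin 6) = Module.finrank ℝ V := by simp
  set b : Basis (Fin 6) ℝ V := basisOfLinearIndependentOfCardEqFinrank hli hcard with hb
  have hbcoe : ⇑b = bv := coe_basisOfLinearIndependentOfCardEqFinrank hli hcard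
  have hval : ∀ i, g (b i) (b i) = ![(2:ℝ), -2, 2, -2, 2*a56, -2*a56] i := by
    intro i; rw [hbcoe, hgram]; simp
  refine ⟨b, ?_, ?_, ?_⟩
  · intro i j hij
    rw [hbcoe, hgram]
    simp [hij]
  · rcases ha56.lt_or_gt with hneg | hpos
    · have hiff : ∀ i : Fin 6, (0 < g (b i) (b i)) ↔ i ∈ ({0, 2, 5} : Finset (Fin 6)) := by
        intro i
        rw [hval]
        fin_cases i
        · exact iff_of_true (show (0:ℝ) < 2 by norm_num) (by decide)
        · exact iff_of_false (show ¬((0:ℝ) < -2) by norm_num) (by decide)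
        · exact iff_of_true (show (0:ℝ) < 2 by norm_num) (by decide)
        · exact iff_of_false (show ¬((0:ℝ) < -2) by norm_num) (by decide)
        · exact iff_of_false (show ¬((0:ℝ) < 2*a56) by linarith) (by decide)
        · exact iff_of_true (show (0:ℝ) < (-2)*a56 by linarith) (by decide)
      rw [Nat.card_congr (Equiv.subtypeEquivRight hiff), Nat.card_eq_finsetCard]
      decide
    · have hiff : ∀ i : Fin 6, (0 < g (b i) (b i)) ↔ i ∈ ({0, 2, 4} : Finset (Fin 6)) := by
        intro i
        rw [hval]
        fin_cases i
        · exact iff_of_true (show (0:ℝ) < 2 by norm_num) (by decide)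
        · exact iff_of_false (show ¬((0:ℝ) < -2) by norm_num) (by decide)
        · exact iff_of_true (show (0:ℝ) < 2 by norm_num) (by decide)
        · exact iff_of_false (show ¬((0:ℝ) < -2) by norm_num) (by decide)
        · exact iff_of_true (show (0:ℝ) < 2*a56 by linarith) (by decide)
        · exact iff_of_false (show ¬((0:ℝ) < (-2)*a56) by linarith) (by decide)
      rw [Nat.card_congr (Equiv.subtypeEquivRight hiff), Nat.card_eq_finsetCard]
      decide
  · rcases ha56.lt_or_gt with hneg | hpos
    · have hiff : ∀ i : Fin 6, (g (b i) (b i) < 0) ↔ i ∈ ({1, 3, 4} : Finset (Fin 6)) := by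
        intro i
        rw [hval]
        fin_cases i
        · exact iff_of_false (show ¬((2:ℝ) < 0) by norm_num) (by decide)
        · exact iff_of_true (show (-2:ℝ) < 0 by norm_num) (by decide)
        · exact iff_of_false (show ¬((2:ℝ) < 0) by norm_num) (by decide)
        · exact iff_of_true (show (-2:ℝ) < 0 by norm_num) (by decide)
        · exact iff_of_true (show (2*a56:ℝ) < 0 by linarith) (by decide)
        · exact iff_of_false (show ¬(((-2)*a56:ℝ) < 0) by linarith) (by decide)
      rw [Nat.card_congr (Equiv.subtypeEquivRight hiff), Nat.card_eq_finsetCard]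
      decide
    · have hiff : ∀ i : Fin 6, (g (b i) (b i) < 0) ↔ i ∈ ({1, 3, 5} : Finset (Fin 6)) := by
        intro i
        rw [hval]
        fin_cases i
        · exact iff_of_false (show ¬((2:ℝ) < 0) by norm_num) (by decide)
        · exact iff_of_true (show (-2:ℝ) < 0 by norm_num) (by decide)
        · exact iff_of_false (show ¬((2:ℝ) < 0) by norm_num) (by decide)
        · exact iff_of_true (show (-2:ℝ) < 0 by norm_num) (by decide)
        · exact iff_of_false (show ¬((2*a56:ℝ) < 0) by linarith) (by decide)
        · exact iff_of_true (show ((-2)*a56:ℝ) < 0 by linarith) (by decide)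
      rw [Nat.card_congr (Equiv.subtypeEquivRight hiff), Nat.card_eq_finsetCard]
      decide
end
end
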